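/- arXiv:1201.5592 — 8 statements merged into one kernel-verified Lean document; each statement's English description precedes it below -/
import Mathlib

section
/- There exists a constant C′ > 0, independent of z and w, such that C′ · k(z,w) · k(z,−w) = 1 for all z, w ∈ 𝔸; equivalently, 1/k(z,w) = C′ · k(z,−w) on 𝔸 × 𝔸. -/
/-!
With `a n = (1 + q ^ (2 * n))⁻¹` (`annCoeff`), `k(z, w) = F (z * conj w)` and
`k(z, -w) = F (-(z * conj w))` for the Laurent series `F x = ∑ a n * x ^ n` (`annSeries`), which
converges on `q ^ 2 < ‖x‖ < 1`. The `N`-th coefficient of `F x * F (-x)` is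
`c N = ∑ a n * (-1) ^ (N - n) * a (N - n)` (`annConv`). For `N ≠ 0` the partial fraction
`a n * a (N - n) = (a (n - N) - a n) / (q ^ (2 * N) - 1)` turns `c N` into an alternating sum of
differences of `a`, which vanishes because `a (-n) + a n = 1`. Hence `F x * F (-x) = c 0`, and
`C' = (c 0)⁻¹`. At `x = q * I` this reads `c 0 = ‖F (q * I)‖ ^ 2`; if `c 0` were `0`, then `F`,
which is positive on `(q ^ 2, 1)`, would vanish on `(-1, -q ^ 2)`, hence on the whole annulus by
the identity theorem.
-/

/-- The annulus `{z : ℂ | q < |z| < 1}`. -/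
def annulus (q : ℝ) : Set ℂ := {z : ℂ | q < ‖z‖ ∧ ‖z‖ < 1}

/-- The kernel `k(z,w) = ∑_{n ∈ ℤ} (z ⬝ conj w)^n / (1 + q^{2n})`. -/
noncomputable def annKer (q : ℝ) (z w : ℂ) : ℂ :=
  ∑' n : ℤ, (z * (starRingEnd ℂ) w) ^ n / (1 + (q : ℂ) ^ (2 * n))

open Filter Topology

lemma neg_one_zpow_sub {K : Type*} [DivisionRing K] (m n : ℤ) :
    (-1 : K) ^ (m - n) = (-1) ^ m * (-1) ^ n := by
  rw [zpow_sub₀ (by norm_num), div_eq_mul_inv, ← inv_zpow, inv_neg_one]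

lemma neg_one_zpow_mul_self {K : Type*} [DivisionRing K] (n : ℤ) :
    (-1 : K) ^ n * (-1) ^ n = 1 := by
  rw [← zpow_add₀ (by norm_num), ← two_mul, zpow_mul]
  norm_num

section Alternating

variable {f : ℤ → ℝ}

lemma summable_sub_of_monotone_of_bounded {m M : ℝ} (hf : Monotone f) (hm : ∀ n, m ≤ f n)
    (hM : ∀ n, f n ≤ M) : Summable fun n => f (n + 1) - f n := by
  have hnonneg : ∀ n, 0 ≤ f (n + 1) - f n := fun n => sub_nonneg.2 (hf (by omega))
  apply Summable.of_nat_of_neg_add_one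
  · refine summable_of_sum_range_le (c := M - m) (fun n => hnonneg n) fun N => ?_
    have h := Finset.sum_range_sub (fun n : ℕ => f n) N
    push_cast at h
    linarith [hm 0, hM N]
  · refine summable_of_sum_range_le (c := M - m) (fun n => hnonneg _) fun N => ?_
    have h := Finset.sum_range_sub' (fun n : ℕ => f (-n)) N
    push_cast at h
    simp only [neg_add, neg_add_cancel_right, neg_zero] at h ⊢
    linarith [hm (-N), hM 0]

lemma hasSum_neg_one_zpow_mul_sub_one (c : ℝ) (hsymm : ∀ n, f (-n) + f n = c)
    (hs : Summable fun n => f (n + 1) - f n) :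
    HasSum (fun n => (-1) ^ n * (f (n + 1) - f n)) 0 := by
  have habs : Summable fun n => (-1 : ℝ) ^ n * (f (n + 1) - f n) := by
    refine summable_abs_iff.1 ?_
    simpa [abs_mul] using hs.abs
  have hrefl := (Equiv.subLeft (-1 : ℤ)).tsum_eq fun n => (-1 : ℝ) ^ n * (f (n + 1) - f n)
  -- `f (-n) + f n = c` makes the differences invariant under `n ↦ -1 - n`, which flips the sign.
  have hterm : ∀ n : ℤ, (-1 : ℝ) ^ (-1 - n) * (f (-1 - n + 1) - f (-1 - n))
      = -((-1) ^ n * (f (n + 1) - f n)) := by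
    intro n
    have h1 := hsymm n
    have h2 := hsymm (n + 1)
    have hdiff : f (-n) - f (-(n + 1)) = f (n + 1) - f n := by linarith
    rw [neg_one_zpow_sub, show -1 - n + 1 = -n by ring, show -1 - n = -(n + 1) by ring, hdiff,
      zpow_neg_one, inv_neg_one]
    ring
  simp only [Equiv.subLeft_apply, hterm, tsum_neg] at hrefl
  convert habs.hasSum
  linarith

lemma hasSum_neg_one_zpow_mul_sub_shift (c : ℝ) (hsymm : ∀ n, f (-n) + f n = c)
    (hs : Summable fun n => f (n + 1) - f n) (N : ℤ) :
    HasSum (fun n => (-1) ^ n * (f (n + N) - f n)) 0 := by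
  have hΔ : ∀ k : ℤ, HasSum (fun n => (-1) ^ n * (f (n + k + 1) - f (n + k))) 0 := by
    intro k
    have := ((Equiv.addRight k).hasSum_iff.2
      (hasSum_neg_one_zpow_mul_sub_one c hsymm hs)).mul_left ((-1) ^ k)
    simp only [Function.comp_def, Equiv.coe_addRight, mul_zero] at this
    refine this.congr_fun fun n => ?_
    rw [zpow_add₀ (by norm_num)]
    linear_combination
      (-(-1) ^ n * (f (n + k + 1) - f (n + k))) * neg_one_zpow_mul_self (K := ℝ) k
  induction N using Int.induction_on with
  | zero => simp
  | succ k ih =>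
    refine (add_zero (0 : ℝ) ▸ ih.add (hΔ k)).congr_fun fun n => ?_
    ring_nf
  | pred k ih =>
    refine (sub_zero (0 : ℝ) ▸ ih.sub (hΔ (-k - 1))).congr_fun fun n => ?_
    ring_nf

end Alternating

lemma zpow_le_zpow_add_zpow {a b t : ℝ} (ha : 0 < a) (hat : a ≤ t) (htb : t ≤ b) (n : ℤ) :
    t ^ n ≤ a ^ n + b ^ n := by
  rcases le_total 0 n with hn | hn
  · linarith [zpow_le_zpow_left₀ hn (ha.trans_le hat).le htb, zpow_pos ha n]
  · have := zpow_le_zpow_left₀ (neg_nonneg.2 hn) ha.le hat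
    rw [zpow_neg, zpow_neg, inv_le_inv₀ (zpow_pos ha n) (zpow_pos (ha.trans_le hat) n)] at this
    linarith [zpow_pos (ha.trans_le (hat.trans htb)) n]

lemma isOpen_setOf_lt_norm_lt (r₁ r₂ : ℝ) : IsOpen {x : ℂ | r₁ < ‖x‖ ∧ ‖x‖ < r₂} :=
  (isOpen_lt continuous_const continuous_norm).inter (isOpen_lt continuous_norm continuous_const)

lemma isPreconnected_annulus {r : ℝ} (hr : 0 < r) : IsPreconnected (annulus r) := by
  have hstrip : Convex ℝ {w : ℂ | Real.log r < w.re ∧ w.re < 0} :=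
    (convex_halfSpace_re_gt _).inter (convex_halfSpace_re_lt _)
  convert hstrip.isPreconnected.image _ Complex.continuous_exp.continuousOn
  ext z
  constructor
  · rintro ⟨hrz, hz1⟩
    have hz0 : z ≠ 0 := norm_pos_iff.1 (hr.trans hrz)
    refine ⟨Complex.log z, ?_, Complex.exp_log hz0⟩
    rw [Set.mem_ofPred_eq, Complex.log_re]
    exact ⟨Real.log_lt_log hr hrz, Real.log_neg (norm_pos_iff.2 hz0) hz1⟩
  · rintro ⟨w, ⟨hw1, hw2⟩, rfl⟩
    rw [annulus, Set.mem_ofPred_eq, Complex.norm_exp]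
    exact ⟨(Real.log_lt_iff_lt_exp hr).1 hw1, Real.exp_lt_one_iff.2 hw2⟩

lemma differentiableOn_tsum_mul_zpow {c : ℤ → ℂ} {R₁ R₂ : ℝ} (hR₁ : 0 ≤ R₁)
    (hc : ∀ r ∈ Set.Ioo R₁ R₂, Summable fun n => ‖c n‖ * r ^ n) :
    DifferentiableOn ℂ (fun x => ∑' n, c n * x ^ n) {x | R₁ < ‖x‖ ∧ ‖x‖ < R₂} := by
  rintro x₀ ⟨h₁, h₂⟩
  obtain ⟨r₁, hr₁, hr₁x⟩ := exists_between h₁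
  obtain ⟨r₂, hxr₂, hr₂⟩ := exists_between h₂
  have hr₁0 : 0 < r₁ := hR₁.trans_lt hr₁
  have hU := isOpen_setOf_lt_norm_lt r₁ r₂
  have hdiff := Complex.differentiableOn_tsum_of_summable_norm
    ((hc r₁ ⟨hr₁, hr₁x.trans h₂⟩).add (hc r₂ ⟨h₁.trans hxr₂, hr₂⟩))
    (fun n x hx => ((differentiableAt_zpow.2 (Or.inl (norm_pos_iff.1 (hr₁0.trans hx.1)))).const_mul
      (c n)).differentiableWithinAt) hU
    (fun n x hx => by
      rw [norm_mul, norm_zpow, ← mul_add]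
      exact mul_le_mul_of_nonneg_left (zpow_le_zpow_add_zpow hr₁0 hx.1.le hx.2.le n)
        (norm_nonneg _))
  exact (hdiff.differentiableAt (hU.mem_nhds ⟨hr₁x, hxr₂⟩)).differentiableWithinAt

lemma tsum_mul_tsum_eq_tsum_tsum_sub {G R : Type*} [AddCommGroup G] [NormedRing R]
    [CompleteSpace R] {f g : G → R} (hf : Summable fun n => ‖f n‖) (hg : Summable fun n => ‖g n‖) :
    (∑' n, f n) * ∑' n, g n = ∑' N, ∑' n, f n * g (N - n) := by
  let e : G × G ≃ G × G :=
    ⟨fun p => (p.2, p.1 - p.2), fun p => (p.1 + p.2, p.1), fun p => by simp, fun p => by simp⟩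
  have hs : Summable fun p : G × G => f p.1 * g p.2 := summable_mul_of_summable_norm hf hg
  rw [tsum_mul_tsum_of_summable_norm hf hg, ← e.tsum_eq]
  exact (e.summable_iff.2 hs).tsum_prod

lemma tsum_mul_zpow_mul_tsum_mul_zpow {c d : ℤ → ℂ} {x : ℂ} (hx : x ≠ 0)
    (hc : Summable fun n => ‖c n‖ * ‖x‖ ^ n) (hd : Summable fun n => ‖d n‖ * ‖x‖ ^ n) :
    (∑' n, c n * x ^ n) * ∑' n, d n * x ^ n = ∑' N, (∑' n, c n * d (N - n)) * x ^ N := by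
  simp_rw [← norm_zpow, ← norm_mul] at hc hd
  rw [tsum_mul_tsum_eq_tsum_tsum_sub hc hd]
  refine tsum_congr fun N => ?_
  rw [← tsum_mul_right]
  refine tsum_congr fun n => ?_
  rw [show N = n + (N - n) by ring, zpow_add₀ hx]
  ring_nf

noncomputable def annCoeff (q : ℝ) (n : ℤ) : ℝ := (1 + q ^ (2 * n))⁻¹

section Coeff

variable {q : ℝ}

lemma annCoeff_pos (hq : 0 < q) (n : ℤ) : 0 < annCoeff q n := by
  unfold annCoeff; positivity

lemma annCoeff_le_one (hq : 0 < q) (n : ℤ) : annCoeff q n ≤ 1 :=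
  inv_le_one_of_one_le₀ (le_add_of_nonneg_right (zpow_pos hq _).le)

lemma annCoeff_neg_add (hq : 0 < q) (n : ℤ) : annCoeff q (-n) + annCoeff q n = 1 := by
  have := zpow_pos hq (2 * n)
  simp only [annCoeff, mul_neg, zpow_neg]
  field_simp
  ring

lemma annCoeff_neg_natCast_le (hq : 0 < q) (n : ℕ) : annCoeff q (-n) ≤ (q ^ 2) ^ n := by
  have h : (q ^ 2) ^ n = (q ^ (2 * (n : ℤ)))⁻¹⁻¹ := by rw [inv_inv, zpow_mul]; norm_cast
  rw [annCoeff, mul_neg, zpow_neg, h]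
  exact inv_anti₀ (by positivity) (le_add_of_nonneg_left zero_le_one)

lemma annCoeff_monotone (hq0 : 0 < q) (hq1 : q < 1) : Monotone (annCoeff q) := by
  intro m n hmn
  apply inv_anti₀ (by positivity)
  gcongr 1 + ?_
  exact zpow_le_zpow_right_of_le_one₀ hq0 hq1.le (by omega)

lemma annCoeff_mul_annCoeff_sub (hq : 0 < q) {N : ℤ} (hN : q ^ (2 * N) ≠ 1) (n : ℤ) :
    annCoeff q n * annCoeff q (N - n) =
      (annCoeff q (n + -N) - annCoeff q n) / (q ^ (2 * N) - 1) := by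
  have hu := zpow_pos hq (2 * n)
  have hv := zpow_pos hq (2 * N)
  have hsub : q ^ (2 * N) - 1 ≠ 0 := sub_ne_zero.2 hN
  simp only [annCoeff, mul_sub, mul_add, mul_neg, zpow_sub₀ hq.ne', zpow_add₀ hq.ne', zpow_neg]
  field_simp
  ring

noncomputable def annConv (q : ℝ) (N : ℤ) : ℝ :=
  ∑' n : ℤ, annCoeff q n * ((-1) ^ (N - n) * annCoeff q (N - n))

lemma annConv_eq_zero (hq0 : 0 < q) (hq1 : q < 1) {N : ℤ} (hN : N ≠ 0) :
    annConv q N = 0 := by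
  have hpow : q ^ (2 * N) ≠ 1 := fun h =>
    hN (by have := zpow_right_injective₀ hq0 hq1.ne (h.trans (zpow_zero q).symm); omega)
  have hdiff := summable_sub_of_monotone_of_bounded (annCoeff_monotone hq0 hq1)
    (fun n => (annCoeff_pos hq0 n).le) (annCoeff_le_one hq0)
  have h := (hasSum_neg_one_zpow_mul_sub_shift 1 (annCoeff_neg_add hq0) hdiff (-N)).mul_left
    ((-1) ^ N / (q ^ (2 * N) - 1))
  rw [mul_zero] at h
  refine (h.congr_fun fun n => ?_).tsum_eq
  rw [mul_left_comm, annCoeff_mul_annCoeff_sub hq0 hpow, neg_one_zpow_sub]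
  ring

end Coeff

noncomputable def annSeries (q : ℝ) (x : ℂ) : ℂ := ∑' n : ℤ, (annCoeff q n : ℂ) * x ^ n

section AnnSeries

variable {q : ℝ}

lemma summable_annCoeff_mul_zpow (hq : 0 < q) {r : ℝ} (hr : q ^ 2 < r) (hr1 : r < 1) :
    Summable fun n => annCoeff q n * r ^ n := by
  have hr0 : 0 < r := (by positivity : (0 : ℝ) < q ^ 2).trans hr
  have hnonneg : ∀ n, 0 ≤ annCoeff q n * r ^ n :=
    fun n => mul_nonneg (annCoeff_pos hq n).le (zpow_pos hr0 n).le
  apply Summable.of_nat_of_neg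
  · refine (summable_geometric_of_lt_one hr0.le hr1).of_nonneg_of_le (fun n => hnonneg n)
      fun n => ?_
    rw [zpow_natCast]
    exact mul_le_of_le_one_left (by positivity) (annCoeff_le_one hq n)
  · refine (summable_geometric_of_lt_one (by positivity) ((div_lt_one hr0).2 hr)).of_nonneg_of_le
      (fun n => hnonneg _) fun n => ?_
    rw [zpow_neg, zpow_natCast, div_pow, div_eq_mul_inv]
    exact mul_le_mul_of_nonneg_right (annCoeff_neg_natCast_le hq n) (by positivity)

lemma norm_annCoeff (hq : 0 < q) (n : ℤ) : ‖(annCoeff q n : ℂ)‖ = annCoeff q n :=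
  Complex.norm_of_nonneg (annCoeff_pos hq n).le

lemma summable_norm_annCoeff_mul_zpow (hq : 0 < q) {x : ℂ} (hx : x ∈ annulus (q ^ 2)) :
    Summable fun n => ‖(annCoeff q n : ℂ)‖ * ‖x‖ ^ n := by
  simpa only [norm_annCoeff hq] using summable_annCoeff_mul_zpow hq hx.1 hx.2

lemma annSeries_mul_annSeries_neg (hq0 : 0 < q) (hq1 : q < 1) {x : ℂ}
    (hx : x ∈ annulus (q ^ 2)) : annSeries q x * annSeries q (-x) = annConv q 0 := by
  have hx0 : x ≠ 0 := norm_pos_iff.1 ((by positivity : (0 : ℝ) < q ^ 2).trans hx.1)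
  have hneg : annSeries q (-x) = ∑' n : ℤ, (((-1) ^ n * annCoeff q n : ℝ) : ℂ) * x ^ n :=
    tsum_congr fun n => by
      rw [neg_eq_neg_one_mul, mul_zpow]
      push_cast
      ring
  have hconv : ∀ N, annConv q N =
      ∑' n : ℤ, (annCoeff q n : ℂ) * (((-1) ^ (N - n) * annCoeff q (N - n) : ℝ) : ℂ) := fun N => by
    rw [annConv, Complex.ofReal_tsum]
    push_cast
    rfl
  have hsum := summable_norm_annCoeff_mul_zpow hq0 hx
  rw [annSeries, hneg, tsum_mul_zpow_mul_tsum_mul_zpow hx0 hsum (by simpa using hsum),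
    tsum_eq_single 0 fun N hN => by rw [← hconv, annConv_eq_zero hq0 hq1 hN]; simp, ← hconv]
  simp

lemma annSeries_ofReal (r : ℝ) :
    annSeries q r = ((∑' n : ℤ, annCoeff q n * r ^ n : ℝ) : ℂ) := by
  rw [annSeries, Complex.ofReal_tsum]
  push_cast
  rfl

lemma annSeries_ofReal_ne_zero (hq : 0 < q) {r : ℝ} (hr : q ^ 2 < r) (hr1 : r < 1) :
    annSeries q r ≠ 0 := by
  have hr0 : 0 < r := (by positivity : (0 : ℝ) < q ^ 2).trans hr
  rw [annSeries_ofReal, Complex.ofReal_ne_zero]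
  refine (Summable.tsum_pos (summable_annCoeff_mul_zpow hq hr hr1)
    (fun n => mul_nonneg (annCoeff_pos hq n).le (zpow_pos hr0 n).le) 0 ?_).ne'
  simpa using annCoeff_pos hq 0

lemma annSeries_conj (x : ℂ) :
    annSeries q (starRingEnd ℂ x) = starRingEnd ℂ (annSeries q x) := by
  rw [annSeries, annSeries, Complex.conj_tsum]
  simp [map_zpow₀]

lemma differentiableOn_annSeries (hq : 0 < q) :
    DifferentiableOn ℂ (annSeries q) (annulus (q ^ 2)) :=
  differentiableOn_tsum_mul_zpow (by positivity) fun _ hr => by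
    simpa only [norm_annCoeff hq] using summable_annCoeff_mul_zpow hq hr.1 hr.2

lemma mem_annulus_sq_of_norm_eq (hq0 : 0 < q) (hq1 : q < 1) {x : ℂ} (hx : ‖x‖ = q) :
    x ∈ annulus (q ^ 2) :=
  ⟨hx ▸ by nlinarith, hx ▸ hq1⟩

lemma annConv_zero_eq_normSq (hq0 : 0 < q) (hq1 : q < 1) :
    annConv q 0 = Complex.normSq (annSeries q (q * Complex.I)) := by
  have h := annSeries_mul_annSeries_neg hq0 hq1
    (mem_annulus_sq_of_norm_eq hq0 hq1 (x := q * Complex.I) (by simp [hq0.le]))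
  rw [show -((q : ℂ) * Complex.I) = starRingEnd ℂ (q * Complex.I) by simp, annSeries_conj,
    Complex.mul_conj] at h
  exact_mod_cast h.symm

lemma annConv_zero_ne_zero (hq0 : 0 < q) (hq1 : q < 1) : annConv q 0 ≠ 0 := by
  intro h0
  have hq2 : q ^ 2 < q := by nlinarith
  have hnormq : ‖(q : ℂ)‖ = q := Complex.norm_of_nonneg hq0.le
  have hvanish : ∀ r ∈ Set.Ioo (q ^ 2) 1, annSeries q (-(r : ℂ)) = 0 := fun r hr => by
    have h := annSeries_mul_annSeries_neg hq0 hq1 (x := r)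
      (by rwa [annulus, Set.mem_ofPred_eq, Complex.norm_of_nonneg ((sq_nonneg q).trans hr.1.le)])
    rw [h0, Complex.ofReal_zero] at h
    exact (mul_eq_zero.1 h).resolve_left (annSeries_ofReal_ne_zero hq0 hr.1 hr.2)
  have hfreq : ∃ᶠ x in 𝓝[≠] (-(q : ℂ)), annSeries q x = 0 := by
    have htends : Tendsto (fun r : ℝ => -(r : ℂ)) (𝓝[≠] q) (𝓝[≠] (-(q : ℂ))) :=
      tendsto_nhdsWithin_of_tendsto_nhds_of_eventually_within _
        ((Complex.continuous_ofReal.neg.tendsto q).mono_left nhdsWithin_le_nhds)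
        (eventually_nhdsWithin_of_forall fun r hr => by simpa using hr)
    exact htends.frequently (eventually_nhdsWithin_of_eventually_nhds
      (eventually_of_mem (Ioo_mem_nhds hq2 hq1) hvanish)).frequently
  have hzero := ((differentiableOn_annSeries hq0).analyticOnNhd (isOpen_setOf_lt_norm_lt _ _))
    |>.eqOn_zero_of_preconnected_of_frequently_eq_zero (isPreconnected_annulus (by positivity))
      (mem_annulus_sq_of_norm_eq hq0 hq1 (by rw [norm_neg, hnormq])) hfreq
  exact annSeries_ofReal_ne_zero hq0 hq2 hq1 (hzero (mem_annulus_sq_of_norm_eq hq0 hq1 hnormq))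

lemma annConv_zero_pos (hq0 : 0 < q) (hq1 : q < 1) : 0 < annConv q 0 :=
  ((annConv_zero_eq_normSq hq0 hq1).symm ▸ Complex.normSq_nonneg _).lt_of_ne'
    (annConv_zero_ne_zero hq0 hq1)

end AnnSeries

lemma mul_conj_mem_annulus_sq {q : ℝ} (hq : 0 ≤ q) {z w : ℂ} (hz : z ∈ annulus q)
    (hw : w ∈ annulus q) : z * starRingEnd ℂ w ∈ annulus (q ^ 2) := by
  rw [annulus, Set.mem_ofPred_eq, norm_mul, Complex.norm_conj, sq]
  exact ⟨mul_lt_mul'' hz.1 hw.1 hq hq,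
    mul_lt_one_of_nonneg_of_lt_one_left (norm_nonneg _) hz.2 hw.2.le⟩

lemma annKer_eq_annSeries (q : ℝ) (z w : ℂ) :
    annKer q z w = annSeries q (z * starRingEnd ℂ w) :=
  tsum_congr fun n => by
    rw [annCoeff]
    push_cast
    ring

/-- There is a constant `C′ > 0`, independent of `z` and `w`, with
`C′ ⬝ k(z,w) ⬝ k(z,−w) = 1` for all `z, w` in the annulus. -/
theorem stmt1 (q : ℝ) (hq : q ∈ Set.Ioo (0 : ℝ) 1) :
    ∃ C' : ℝ, 0 < C' ∧ ∀ z w : ℂ, z ∈ annulus q → w ∈ annulus q →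
      (C' : ℂ) * annKer q z w * annKer q z (-w) = 1 := by
  obtain ⟨hq0, hq1⟩ := hq
  refine ⟨(annConv q 0)⁻¹, inv_pos.2 (annConv_zero_pos hq0 hq1), fun z w hz hw => ?_⟩
  rw [annKer_eq_annSeries, annKer_eq_annSeries, map_neg, mul_neg, mul_assoc,
    annSeries_mul_annSeries_neg hq0 hq1 (mul_conj_mem_annulus_sq hq0.le hz hw),
    ← Complex.ofReal_mul, inv_mul_cancel₀ (annConv_zero_pos hq0 hq1).ne', Complex.ofReal_one]
end

section
/- If t > 0 and t ≠ q^{2m} for every integer m, then there exist z, w ∈ 𝔸 such that k(z,w;t) = 0. -/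
/-- The kernel `k(z,w;t) = ∑_{n ∈ ℤ} (z ⬝ conj w)^n / (1 + t ⬝ q^{2n})`. -/
noncomputable def annKerT (q t : ℝ) (z w : ℂ) : ℂ :=
  ∑' n : ℤ, (z * (starRingEnd ℂ) w) ^ n / (1 + (t : ℂ) * (q : ℂ) ^ (2 * n))

theorem hasSum_zero_of_rows_of_cols {E : Type*} [AddCommGroup E] [TopologicalSpace E]
    [IsTopologicalAddGroup E] [RegularSpace E] {a : ℤ → E} {d : ℕ → ℕ → E}
    (hd : Summable (Function.uncurry d)) (row : ∀ n, HasSum (d n ·) (a n))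
    (col : ∀ k, HasSum (d · k) (-a (-(k + 1)))) : HasSum a 0 := by
  have hrows : HasSum (fun n : ℕ => a n) (∑' p, Function.uncurry d p) :=
    hd.hasSum.prod_fiberwise row
  have hcols : HasSum (fun k : ℕ => -a (-(k + 1))) (∑' p, Function.uncurry d p) :=
    ((Equiv.prodComm ℕ ℕ).hasSum_iff.mpr hd.hasSum).prod_fiberwise col
  have hneg : HasSum (fun k : ℕ => a (-(k + 1))) (-∑' p, Function.uncurry d p) := by
    simpa only [neg_neg] using hcols.neg
  simpa only [add_neg_cancel] using hrows.of_nat_of_neg_add_one hneg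

noncomputable def annKerReal (Q t x : ℝ) : ℝ := ∑' n : ℤ, x ^ n / (1 + t * Q ^ n)

theorem annKerReal_neg_div_self {Q s : ℝ} (hQ : 0 < Q) (hQs : Q < s) (hs : s < 1) :
    annKerReal Q s (-(Q / s)) = 0 := by
  have hs0 : 0 < s := hQ.trans hQs
  set d : ℕ → ℕ → ℝ := fun n k => (-(Q / s)) ^ n * (-(s * Q ^ n)) ^ k with hd
  have hd_col : ∀ n k, d n k = (-s) ^ k * (-(Q ^ (k + 1) / s)) ^ n := fun n k => by ring
  have hsum : Summable (Function.uncurry d) := by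
    have hQs_geom := summable_geometric_of_lt_one (by positivity) ((div_lt_one hs0).2 hQs)
    refine .of_norm_bounded (hQs_geom.mul_of_nonneg (summable_geometric_of_lt_one hs0.le hs)
      (fun _ => by positivity) (fun _ => by positivity)) ?_
    rintro ⟨n, k⟩
    simp only [Function.uncurry, hd, norm_mul, norm_pow, norm_neg,
      Real.norm_of_nonneg (by positivity : 0 ≤ Q / s),
      Real.norm_of_nonneg (by positivity : 0 ≤ s * Q ^ n)]
    gcongr
    exact mul_le_of_le_one_right hs0.le (pow_le_one₀ hQ.le (hQs.trans hs).le)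
  refine (hasSum_zero_of_rows_of_cols hsum (fun n => ?_) (fun k => ?_)).tsum_eq
  · have hr : |-(s * Q ^ n)| < 1 := by
      rw [abs_neg, abs_of_pos (by positivity)]
      exact mul_lt_one_of_nonneg_of_lt_one_left hs0.le hs (pow_le_one₀ hQ.le (hQs.trans hs).le)
    have hval : (-(Q / s)) ^ (n : ℤ) / (1 + s * Q ^ (n : ℤ)) =
        (-(Q / s)) ^ n * (1 - -(s * Q ^ n))⁻¹ := by
      simp only [zpow_natCast, div_eq_mul_inv, sub_neg_eq_add]
    rw [hval]
    exact (hasSum_geometric_of_abs_lt_one hr).mul_left _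
  · have hr : |-(Q ^ (k + 1) / s)| < 1 := by
      rw [abs_neg, abs_of_pos (by positivity), div_lt_one hs0]
      exact (pow_le_of_le_one hQ.le (hQs.trans hs).le k.succ_ne_zero).trans_lt (by simpa using hQs)
    have hval : -((-(Q / s)) ^ (-((k : ℤ) + 1)) / (1 + s * Q ^ (-((k : ℤ) + 1)))) =
        (-s) ^ k * (1 - -(Q ^ (k + 1) / s))⁻¹ := by
      have hsign : ((-1 : ℝ) ^ k) ^ 2 = 1 := by rw [pow_right_comm, neg_one_sq, one_pow]
      rw [show -((k : ℤ) + 1) = -((k + 1 : ℕ) : ℤ) by push_cast; rfl]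
      simp only [zpow_neg, zpow_natCast, neg_pow (Q / s), neg_pow s, div_pow, pow_succ (-1 : ℝ),
        sub_neg_eq_add]
      have : Q ^ (k + 1) + s ≠ 0 := by positivity
      field_simp
      rw [hsign]
      ring
    simp only [hd_col, hval]
    exact (hasSum_geometric_of_abs_lt_one hr).mul_left _

theorem annKerT_ofReal (q t a b : ℝ) : annKerT q t a b = annKerReal (q ^ 2) t (a * b) := by
  rw [annKerT, annKerReal, Complex.ofReal_tsum]
  congr 1 with n
  rw [Complex.conj_ofReal, zpow_mul]
  push_cast
  rfl

theorem annKerReal_mul_zpow {Q x : ℝ} (s : ℝ) (m : ℤ) (hQ : Q ≠ 0) (hx : x ≠ 0) :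
    annKerReal Q (s * Q ^ m) x = x ^ (-m) * annKerReal Q s x := by
  rw [annKerReal, annKerReal, ← tsum_mul_left,
    ← (Equiv.addRight m).tsum_eq fun n => x ^ (-m) * (x ^ n / (1 + s * Q ^ n))]
  congr 1 with n
  rw [Equiv.coe_addRight, zpow_add₀ hx, zpow_add₀ hQ, zpow_neg, mul_div_assoc', mul_comm (x ^ n),
    ← mul_assoc, inv_mul_cancel₀ (zpow_ne_zero m hx), one_mul]
  ring

theorem exists_zpow_succ_lt_lt_zpow {Q t : ℝ} (hQ0 : 0 < Q) (hQ1 : Q < 1) (ht : 0 < t)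
    (htQ : ∀ m : ℤ, t ≠ Q ^ m) : ∃ m : ℤ, Q ^ (m + 1) < t ∧ t < Q ^ m := by
  obtain ⟨n, hn, hn_succ⟩ := exists_mem_Ico_zpow ht ((one_lt_inv₀ hQ0).2 hQ1)
  refine ⟨-n - 1, ?_, ?_⟩
  · rw [sub_add_cancel, zpow_neg, ← inv_zpow]
    exact hn.lt_of_ne fun h => htQ (-n) (by rw [← h, inv_zpow, zpow_neg])
  · rwa [← neg_add', zpow_neg, ← inv_zpow]

theorem ofReal_mem_annulus {q r : ℝ} (hq : 0 ≤ q) (hr : r ∈ Set.Ioo q 1) :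
    (r : ℂ) ∈ annulus q := by
  simpa [annulus, abs_of_pos (hq.trans_lt hr.1)] using hr

theorem neg_mem_annulus {q : ℝ} {z : ℂ} (hz : z ∈ annulus q) : -z ∈ annulus q := by
  simpa [annulus] using hz

/-- If `t > 0` and `t ≠ q^{2m}` for every integer `m`, then the kernel `k(·,·;t)`
has a zero in the annulus. -/
theorem stmt2 (q : ℝ) (hq : q ∈ Set.Ioo (0 : ℝ) 1) (t : ℝ) (ht : 0 < t)
    (htq : ∀ m : ℤ, t ≠ q ^ (2 * m)) :
    ∃ z w : ℂ, z ∈ annulus q ∧ w ∈ annulus q ∧ annKerT q t z w = 0 := by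
  obtain ⟨hq0, hq1⟩ := hq
  have hQ0 : 0 < q ^ 2 := by positivity
  have hQ1 : q ^ 2 < 1 := pow_lt_one₀ hq0.le hq1 two_ne_zero
  obtain ⟨m, hm_succ, hm⟩ := exists_zpow_succ_lt_lt_zpow hQ0 hQ1 ht fun m => by
    simpa only [zpow_mul, zpow_ofNat] using htq m
  have hQm : 0 < (q ^ 2) ^ m := zpow_pos hQ0 m
  set s := t / (q ^ 2) ^ m with hs
  have hQs : q ^ 2 < s := by rwa [hs, lt_div_iff₀ hQm, ← zpow_one_add₀ hQ0.ne', add_comm]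
  have hs1 : s < 1 := (div_lt_one hQm).2 hm
  set r := √(q ^ 2 / s)
  have hr : r ∈ Set.Ioo q 1 := by
    constructor
    · rw [Real.lt_sqrt hq0.le, lt_div_iff₀ (hQ0.trans hQs)]
      exact mul_lt_of_lt_one_right hQ0 hs1
    · rw [Real.sqrt_lt' one_pos, one_pow, div_lt_one (hQ0.trans hQs)]
      exact hQs
  refine ⟨-r, r, neg_mem_annulus (ofReal_mem_annulus hq0.le hr), ofReal_mem_annulus hq0.le hr, ?_⟩
  have hrr : -r * r = -(q ^ 2 / s) := by rw [neg_mul, Real.mul_self_sqrt (by positivity)]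
  have hts : t = s * (q ^ 2) ^ m := (div_mul_cancel₀ t hQm.ne').symm
  rw [← Complex.ofReal_neg, annKerT_ofReal, hrr, hts,
    annKerReal_mul_zpow s m hQ0.ne' (neg_ne_zero.2 (by positivity)),
    annKerReal_neg_div_self hQ0 hQs hs1, mul_zero, Complex.ofReal_zero]
end

section
/- For every bounded operator G on M, the series ∑_{n∈ℤ} T_n G T_n* and C′·∑_{n∈ℤ} (−1)^n T_n G T_n* converge absolutely in operator norm, and one has k(T,T*)((1/k)(T,T*)(G)) = G and (1/k)(T,T*)(k(T,T*)(G)) = G. -/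
open ContinuousLinearMap

variable {M : Type*} [NormedAddCommGroup M] [InnerProductSpace ℂ M] [CompleteSpace M]

/-- Integer powers `T^n` of an operator (using `Ring.inverse` for negative `n`). -/
noncomputable def zpowCLM (T : M →L[ℂ] M) (n : ℤ) : M →L[ℂ] M :=
  if 0 ≤ n then T ^ n.toNat else (Ring.inverse T) ^ (-n).toNat

/-- The operator `T_n := (1+q^{2n})^{-1/2} ⬝ T^n`. -/
noncomputable def annOp (q : ℝ) (T : M →L[ℂ] M) (n : ℤ) : M →L[ℂ] M :=
  (((Real.sqrt (1 + q ^ (2 * n)))⁻¹ : ℝ) : ℂ) • zpowCLM T n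

/-- `k(T,T^*)(G) := ∑_{n ∈ ℤ} T_n G T_n^*`. -/
noncomputable def kerCal (q : ℝ) (T G : M →L[ℂ] M) : M →L[ℂ] M :=
  ∑' n : ℤ, annOp q T n ∘L G ∘L adjoint (annOp q T n)

/-- `(1/k)(T,T^*)(G) := C′ ⬝ ∑_{n ∈ ℤ} (−1)^n T_n G T_n^*`. -/
noncomputable def invkerCal (q C' : ℝ) (T G : M →L[ℂ] M) : M →L[ℂ] M :=
  (C' : ℂ) • ∑' n : ℤ, ((-1 : ℂ) ^ n) • (annOp q T n ∘L G ∘L adjoint (annOp q T n))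

/-!
Write `b n = (1 + q ^ (2n))⁻¹`. Conjugation `X ↦ T X T*` is a unit `V` of the Banach algebra of
operators on `M →L[ℂ] M`, and `T_n X T_n* = b n • V ^ n X`, so `k(T,T*)` and `(1/k)(T,T*)` are the
Laurent series `∑ b n V ^ n` and `C' ∑ (-1) ^ n b n V ^ n`. Gelfand's formula bounds `‖T ^ n‖` and
`‖(q T⁻¹) ^ n‖` geometrically (both spectra lie in the open unit disc), which together with
`b n ≤ 1` and `b (-n) ≤ q ^ (2n)` gives absolute convergence. The product of the two series is the
Laurent series whose coefficients are the alternating convolutions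
`s N = ∑ (-1) ^ n b n b (N - n)`. The identities `b n + b (-n) = 1` and
`(1 - q ^ (2N)) b n b (N - n) = b n - b (n - N)` telescope to `s N = 0` for `N ≠ 0`, and the same
Laurent product for the scalar `z * conj w` turns `C' k(z,w) k(z,-w) = 1` into `C' s 0 = 1`.
-/

section LaurentSeries

variable {𝕜 B : Type*} [NontriviallyNormedField 𝕜] [NormedRing B] [NormedAlgebra 𝕜 B]

noncomputable def laurentSum (a : ℤ → 𝕜) (v : Bˣ) : B := ∑' n, a n • (↑(v ^ n) : B)

theorem laurentSum_ite_zero (v : Bˣ) (c : 𝕜) :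
    laurentSum (fun N => if N = 0 then c else 0) v = c • 1 := by
  simp only [laurentSum, ite_smul, zero_smul]
  rw [tsum_ite_eq, zpow_zero, Units.val_one]

def subFstEquiv : ℤ × ℤ ≃ ℤ × ℤ where
  toFun p := (p.1 - p.2, p.2)
  invFun p := (p.1 + p.2, p.2)
  left_inv p := by simp
  right_inv p := by simp

variable [CompleteSpace B]

theorem laurentSum_mul_laurentSum (v : Bˣ) {a c : ℤ → 𝕜}
    (ha : Summable fun n => ‖a n‖ * ‖(↑(v ^ n) : B)‖)
    (hc : Summable fun n => ‖c n‖ * ‖(↑(v ^ n) : B)‖)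
    (hac : ∀ N, Summable fun n => a (N - n) * c n) :
    laurentSum a v * laurentSum c v = laurentSum (fun N => ∑' n, a (N - n) * c n) v := by
  have hf : Summable fun m => ‖a m • (↑(v ^ m) : B)‖ :=
    ha.of_nonneg_of_le (fun _ => norm_nonneg _) fun _ => norm_smul_le _ _
  have hg : Summable fun n => ‖c n • (↑(v ^ n) : B)‖ :=
    hc.of_nonneg_of_le (fun _ => norm_nonneg _) fun _ => norm_smul_le _ _
  let F : ℤ × ℤ → B := fun p => (a p.1 * c p.2) • (↑(v ^ (p.1 + p.2)) : B)
  have hterm : ∀ p : ℤ × ℤ, a p.1 • (↑(v ^ p.1) : B) * c p.2 • (↑(v ^ p.2) : B) = F p := by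
    intro p
    rw [smul_mul_smul_comm, ← Units.val_mul, ← zpow_add]
  have hF : Summable F := (summable_mul_of_summable_norm hf hg).congr hterm
  have hF' : Summable fun p => F (subFstEquiv p) := (subFstEquiv.summable_iff (f := F)).mpr hF
  rw [laurentSum, laurentSum, laurentSum, tsum_mul_tsum_of_summable_norm hf hg, tsum_congr hterm,
    ← subFstEquiv.tsum_eq F, hF'.tsum_prod]
  refine tsum_congr fun N => ?_
  rw [← (hac N).tsum_smul_const]
  refine tsum_congr fun n => ?_
  simp only [F, subFstEquiv, Equiv.coe_fn_mk, sub_add_cancel]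

theorem laurentSum_apply {E : Type*} [NormedAddCommGroup E] [NormedSpace 𝕜 E] [CompleteSpace E]
    (v : (E →L[𝕜] E)ˣ) {a : ℤ → 𝕜} (ha : Summable fun n => ‖a n‖ * ‖(↑(v ^ n) : E →L[𝕜] E)‖)
    (x : E) : laurentSum a v x = ∑' n, a n • (↑(v ^ n) : E →L[𝕜] E) x :=
  (ContinuousLinearMap.apply 𝕜 E x).map_tsum (ha.of_norm_bounded fun _ => norm_smul_le _ _)

end LaurentSeries

section Gelfand

open Filter

variable {A : Type*} [NormedRing A] [NormedAlgebra ℂ A] [CompleteSpace A]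

theorem eventually_norm_pow_le_of_spectralRadius_lt {a : A} {r : ℝ}
    (h : spectralRadius ℂ a < ENNReal.ofReal r) : ∀ᶠ n : ℕ in atTop, ‖a ^ n‖ ≤ r ^ n := by
  have hr : 0 < r := ENNReal.ofReal_pos.mp (lt_of_le_of_lt bot_le h)
  filter_upwards [(spectrum.pow_norm_pow_one_div_tendsto_nhds_spectralRadius a).eventually_lt_const
    h, eventually_ne_atTop 0] with n hn hn0
  rw [ENNReal.ofReal_lt_ofReal_iff hr, one_div] at hn
  calc ‖a ^ n‖ = (‖a ^ n‖ ^ (n⁻¹ : ℝ)) ^ n := (Real.rpow_inv_natCast_pow (norm_nonneg _) hn0).symm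
    _ ≤ r ^ n := pow_le_pow_left₀ (by positivity) hn.le n

theorem summable_norm_pow_sq_of_spectrum_subset_ball {a : A}
    (ha : spectrum ℂ a ⊆ Metric.ball 0 1) : Summable fun n : ℕ => ‖a ^ n‖ ^ 2 := by
  rcases subsingleton_or_nontrivial A with hA | hA
  · simp [Subsingleton.elim _ (0 : A)]
  have hρ : spectralRadius ℂ a < 1 := by
    simpa using spectrum.spectralRadius_lt_of_forall_lt a (r := 1) fun z hz => by
      simpa [← NNReal.coe_lt_coe] using ha hz
  obtain ⟨r, hr0, hρr, hr1⟩ := ENNReal.lt_iff_exists_real_btwn.mp hρ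
  have hr1 : r < 1 := by simpa using hr1
  refine summable_of_isBigO_nat (summable_geometric_of_lt_one (sq_nonneg r) (by nlinarith))
    (Asymptotics.IsBigO.of_bound 1 ?_)
  filter_upwards [eventually_norm_pow_le_of_spectralRadius_lt hρr] with n hn
  rw [one_mul, Real.norm_of_nonneg (by positivity), Real.norm_of_nonneg (by positivity), ← pow_mul,
    mul_comm, pow_mul]
  exact pow_le_pow_left₀ (norm_nonneg _) hn 2

end Gelfand

section ConjStar

variable (𝕜 : Type*) {A : Type*} [NontriviallyNormedField 𝕜] [NormedRing A] [NormedAlgebra 𝕜 A]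
  [StarRing A]

noncomputable def conjStarHom : A →* (A →L[𝕜] A) where
  toFun a := ContinuousLinearMap.mulLeftRight 𝕜 A a (star a)
  map_one' := by ext; simp
  map_mul' a b := by ext; simp [mul_assoc]

variable {𝕜}

lemma conjStarHom_apply (a x : A) : conjStarHom 𝕜 a x = a * x * star a := rfl

lemma norm_conjStarHom_le [NormedStarGroup A] (a : A) : ‖conjStarHom 𝕜 a‖ ≤ ‖a‖ ^ 2 :=
  (ContinuousLinearMap.opNorm_mulLeftRight_apply_apply_le 𝕜 A a (star a)).trans_eq
    (by rw [norm_star, sq])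

end ConjStar

lemma neg_one_zpow_one_sub {α : Type*} [DivisionRing α] (n : ℤ) :
    (-1 : α) ^ (1 - n) = -(-1) ^ n := by
  rcases Int.even_or_odd n with h | h <;>
    simp [neg_one_zpow_eq_ite, Int.even_sub, h, Int.not_even_iff_odd.mpr]

section AnnulusWeight

variable {q : ℝ}

noncomputable def annWeight (q : ℝ) (n : ℤ) : ℝ := (1 + q ^ (2 * n))⁻¹

lemma annWeight_pos (hq : 0 < q) (n : ℤ) : 0 < annWeight q n := by
  unfold annWeight; positivity

lemma annWeight_le_one (hq : 0 < q) (n : ℤ) : annWeight q n ≤ 1 :=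
  inv_le_one_of_one_le₀ (by linarith [zpow_pos hq (2 * n)])

lemma annWeight_le_zpow (hq : 0 < q) (n : ℤ) : annWeight q n ≤ (q ^ 2) ^ (-n) := by
  have h : 0 < q ^ (2 * n) := zpow_pos hq _
  calc annWeight q n ≤ (q ^ (2 * n))⁻¹ := inv_anti₀ h (by linarith)
    _ = (q ^ 2) ^ (-n) := by rw [zpow_neg, zpow_mul]; norm_cast

lemma annWeight_add_annWeight_neg (hq : 0 < q) (n : ℤ) : annWeight q n + annWeight q (-n) = 1 := by
  have h : 0 < q ^ (2 * n) := zpow_pos hq _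
  rw [annWeight, annWeight, mul_neg, zpow_neg]
  field_simp
  ring

lemma one_sub_zpow_mul_annWeight_mul (hq : 0 < q) (N n : ℤ) :
    (1 - q ^ (2 * N)) * (annWeight q n * annWeight q (N - n)) =
      annWeight q n - annWeight q (n - N) := by
  have hn : 0 < q ^ (2 * n) := zpow_pos hq _
  have hN : 0 < q ^ (2 * (N - n)) := zpow_pos hq _
  have hsplit : q ^ (2 * N) = q ^ (2 * n) * q ^ (2 * (N - n)) := by
    rw [← zpow_add₀ hq.ne']; ring_nf
  have hneg : q ^ (2 * (n - N)) = (q ^ (2 * (N - n)))⁻¹ := by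
    rw [← zpow_neg]; ring_nf
  rw [annWeight, annWeight, annWeight, hsplit, hneg]
  field_simp
  ring

lemma summable_annWeight_mul (hq : 0 < q) {f : ℤ → ℝ} (hf : ∀ n, 0 ≤ f n)
    (hpos : Summable fun k : ℕ => f k) (hneg : Summable fun k : ℕ => (q ^ 2) ^ k * f (-k)) :
    Summable fun n => annWeight q n * f n := by
  refine summable_int_iff_summable_nat_and_neg.mpr ⟨?_, ?_⟩
  · exact hpos.of_nonneg_of_le (fun k => mul_nonneg (annWeight_pos hq _).le (hf _))
      fun k => mul_le_of_le_one_left (hf _) (annWeight_le_one hq _)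
  · refine hneg.of_nonneg_of_le (fun k => mul_nonneg (annWeight_pos hq _).le (hf _)) fun k => ?_
    gcongr
    · exact hf _
    · simpa using annWeight_le_zpow hq (-k)

lemma summable_annWeight_mul_annWeight_sub (hq : 0 < q) (hq1 : q < 1) (N : ℤ) :
    Summable fun n => annWeight q n * annWeight q (N - n) := by
  have hgeom := summable_geometric_of_lt_one (sq_nonneg q) (by nlinarith)
  refine summable_annWeight_mul hq (fun _ => (annWeight_pos hq _).le) ?_ ?_
  · refine (hgeom.mul_left ((q ^ 2) ^ (-N))).of_nonneg_of_le
      (fun _ => (annWeight_pos hq _).le) fun k => (annWeight_le_zpow hq _).trans_eq ?_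
    rw [neg_sub, zpow_sub₀ (by positivity), zpow_natCast, div_eq_inv_mul, zpow_neg]
  · exact hgeom.of_nonneg_of_le (fun _ => mul_nonneg (by positivity) (annWeight_pos hq _).le)
      fun k => mul_le_of_le_one_right (by positivity) (annWeight_le_one hq _)

noncomputable def annWeightAltConv (q : ℝ) (N : ℤ) : ℝ :=
  ∑' n : ℤ, (-1) ^ n * (annWeight q n * annWeight q (N - n))

lemma summable_annWeightAltConv (hq : 0 < q) (hq1 : q < 1) (N : ℤ) :
    Summable fun n : ℤ => (-1 : ℝ) ^ n * (annWeight q n * annWeight q (N - n)) :=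
  (summable_annWeight_mul_annWeight_sub hq hq1 N).of_norm_bounded fun n => by
    simp [abs_of_pos (annWeight_pos hq _)]

lemma summable_neg_one_zpow_mul_annWeight_sub (hq : 0 < q) (hq1 : q < 1) (N : ℤ) :
    Summable fun n : ℤ => (-1 : ℝ) ^ n * (annWeight q n - annWeight q (n - N)) :=
  ((summable_annWeightAltConv hq hq1 N).mul_left (1 - q ^ (2 * N))).congr fun n => by
    rw [← one_sub_zpow_mul_annWeight_mul hq]; ring

lemma tsum_neg_one_zpow_mul_annWeight_sub_one (hq : 0 < q) :
    ∑' n : ℤ, (-1 : ℝ) ^ n * (annWeight q n - annWeight q (n - 1)) = 0 := by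
  -- `n ↦ 1 - n` reverses the sign of every term
  have hanti : ∀ n : ℤ, (-1 : ℝ) ^ (1 - n) * (annWeight q (1 - n) - annWeight q (1 - n - 1)) =
      -((-1) ^ n * (annWeight q n - annWeight q (n - 1))) := fun n => by
    have h1 := annWeight_add_annWeight_neg hq (n - 1)
    have h2 := annWeight_add_annWeight_neg hq n
    rw [neg_sub] at h1
    rw [neg_one_zpow_one_sub, sub_sub_cancel_left]
    linear_combination ((-1 : ℝ) ^ n) * (h2 - h1)
  have h := (Equiv.subLeft (1 : ℤ)).tsum_eq
    fun n => (-1 : ℝ) ^ n * (annWeight q n - annWeight q (n - 1))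
  simp only [Equiv.subLeft_apply, hanti, tsum_neg] at h
  linarith

lemma tsum_neg_one_zpow_mul_annWeight_sub (hq : 0 < q) (hq1 : q < 1) (N : ℤ) :
    ∑' n : ℤ, (-1 : ℝ) ^ n * (annWeight q n - annWeight q (n - N)) = 0 := by
  set D : ℤ → ℝ := fun N => ∑' n : ℤ, (-1 : ℝ) ^ n * (annWeight q n - annWeight q (n - N))
  have hstep : ∀ N, D (N + 1) - D N = (-1) ^ N * D 1 := fun N => by
    rw [← (summable_neg_one_zpow_mul_annWeight_sub hq hq1 _).tsum_sub
      (summable_neg_one_zpow_mul_annWeight_sub hq hq1 _), ← tsum_mul_left,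
      ← (Equiv.addRight N).tsum_eq]
    refine tsum_congr fun n => ?_
    simp only [Equiv.coe_addRight, add_sub_cancel_right, zpow_add₀ (by norm_num : (-1 : ℝ) ≠ 0)]
    ring_nf
  have hconst : ∀ N, D (N + 1) = D N := fun N => by
    rw [← sub_eq_zero, hstep, show D 1 = 0 from tsum_neg_one_zpow_mul_annWeight_sub_one hq,
      mul_zero]
  show D N = 0
  induction N using Int.induction_on with
  | zero => simp [D]
  | succ k ih => rw [hconst, ih]
  | pred k ih => rwa [← hconst, sub_add_cancel]

lemma annWeightAltConv_eq_zero (hq : 0 < q) (hq1 : q < 1) {N : ℤ} (hN : N ≠ 0) :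
    annWeightAltConv q N = 0 := by
  have hne : 1 - q ^ (2 * N) ≠ 0 := fun h => by
    have : q ^ (2 * N) = q ^ (0 : ℤ) := by rw [zpow_zero]; linarith
    have := (zpow_right_strictAnti₀ hq hq1).injective this
    omega
  refine (mul_eq_zero.mp ?_).resolve_left hne
  rw [annWeightAltConv, ← tsum_mul_left, ← tsum_neg_one_zpow_mul_annWeight_sub hq hq1 N]
  refine tsum_congr fun n => ?_
  rw [← one_sub_zpow_mul_annWeight_mul hq]; ring

end AnnulusWeight

section AnnulusLaurent

variable {q : ℝ} {B : Type*} [NormedRing B] [NormedAlgebra ℂ B] [CompleteSpace B]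

lemma tsum_annWeight_sub_mul_alt (hq : 0 < q) (hq1 : q < 1) (N : ℤ) :
    ∑' n, (annWeight q (N - n) : ℂ) * ((-1) ^ n * annWeight q n) =
      if N = 0 then (annWeightAltConv q 0 : ℂ) else 0 := by
  have h : ∑' n, (annWeight q (N - n) : ℂ) * ((-1) ^ n * annWeight q n) =
      annWeightAltConv q N := by
    rw [annWeightAltConv, Complex.ofReal_tsum]
    refine tsum_congr fun n => ?_
    push_cast
    ring
  split_ifs with hN
  · rw [h, hN]
  · rw [h, annWeightAltConv_eq_zero hq hq1 hN, Complex.ofReal_zero]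

lemma norm_annWeight (hq : 0 < q) (n : ℤ) : ‖(annWeight q n : ℂ)‖ = annWeight q n := by
  rw [Complex.norm_real, Real.norm_of_nonneg (annWeight_pos hq n).le]

lemma norm_neg_one_zpow_mul_annWeight (hq : 0 < q) (n : ℤ) :
    ‖(-1 : ℂ) ^ n * annWeight q n‖ = annWeight q n := by
  rw [norm_mul, norm_zpow, norm_neg, norm_one, one_zpow, one_mul, norm_annWeight hq]

theorem laurentSum_annWeight_mul_alt (hq : 0 < q) (hq1 : q < 1) (v : Bˣ)
    (hv : Summable fun n => annWeight q n * ‖(↑(v ^ n) : B)‖) :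
    laurentSum (fun n => (annWeight q n : ℂ)) v *
        laurentSum (fun n => (-1 : ℂ) ^ n * annWeight q n) v = (annWeightAltConv q 0 : ℂ) • 1 ∧
      laurentSum (fun n => (-1 : ℂ) ^ n * annWeight q n) v *
        laurentSum (fun n => (annWeight q n : ℂ)) v = (annWeightAltConv q 0 : ℂ) • 1 := by
  have ha : Summable fun n => ‖(annWeight q n : ℂ)‖ * ‖(↑(v ^ n) : B)‖ := by
    simpa only [norm_annWeight hq]
  have hc : Summable fun n => ‖(-1 : ℂ) ^ n * annWeight q n‖ * ‖(↑(v ^ n) : B)‖ := by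
    simpa only [norm_neg_one_zpow_mul_annWeight hq]
  have hsum : ∀ N, Summable fun n => (annWeight q (N - n) : ℂ) * ((-1) ^ n * annWeight q n) :=
    fun N => (Complex.summable_ofReal.mpr (summable_annWeightAltConv hq hq1 N)).congr fun n => by
      push_cast; ring
  -- reindexing by `n ↦ N - n` turns the second convolution into the first
  have hrev : ∀ N n : ℤ, (-1 : ℂ) ^ (N - n) * annWeight q (N - n) * annWeight q n =
      annWeight q (N - (N - n)) * ((-1) ^ (N - n) * annWeight q (N - n)) := fun N n => by
    rw [sub_sub_cancel]; ring
  refine ⟨?_, ?_⟩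
  · rw [laurentSum_mul_laurentSum v ha hc hsum, ← laurentSum_ite_zero v]
    simp only [tsum_annWeight_sub_mul_alt hq hq1]
  · rw [laurentSum_mul_laurentSum v hc ha fun N =>
      ((hsum N).comp_injective (sub_right_injective (b := N))).congr fun n => (hrev N n).symm,
      ← laurentSum_ite_zero v]
    simp only [hrev]
    exact congrArg (laurentSum · v) <| funext fun N => ((Equiv.subLeft N).tsum_eq
      fun n => (annWeight q (N - n) : ℂ) * ((-1) ^ n * annWeight q n)).trans
        (tsum_annWeight_sub_mul_alt hq hq1 N)

end AnnulusLaurent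

section Kernel

variable {q : ℝ}

lemma annKer_eq_laurentSum (z w : ℂ) (hu : z * starRingEnd ℂ w ≠ 0) :
    annKer q z w = laurentSum (fun n => (annWeight q n : ℂ)) (Units.mk0 _ hu) := by
  rw [annKer, laurentSum]
  refine tsum_congr fun n => ?_
  rw [Units.val_zpow_eq_zpow_val, Units.val_mk0, annWeight, smul_eq_mul]
  push_cast
  ring

lemma annKer_neg_eq_laurentSum (z w : ℂ) (hu : z * starRingEnd ℂ w ≠ 0) :
    annKer q z (-w) = laurentSum (fun n => (-1 : ℂ) ^ n * annWeight q n) (Units.mk0 _ hu) := by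
  rw [annKer, laurentSum]
  refine tsum_congr fun n => ?_
  rw [Units.val_zpow_eq_zpow_val, Units.val_mk0, annWeight, smul_eq_mul, map_neg, mul_neg,
    neg_eq_neg_one_mul, mul_zpow]
  push_cast
  ring

lemma summable_annWeight_mul_zpow (hq : 0 < q) {r : ℝ} (hr : q ^ 2 < r) (hr1 : r < 1) :
    Summable fun n => annWeight q n * r ^ n := by
  have hr0 : 0 < r := (pow_pos hq 2).trans hr
  refine summable_annWeight_mul hq (fun n => (zpow_pos hr0 n).le) ?_ ?_
  · simpa using summable_geometric_of_lt_one hr0.le hr1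
  · refine (summable_geometric_of_lt_one (by positivity) ((div_lt_one hr0).mpr hr)).congr
      fun k => ?_
    rw [zpow_neg, zpow_natCast, div_pow, div_eq_mul_inv]

theorem annKer_mul_annKer_neg (hq : 0 < q) (hq1 : q < 1) {z w : ℂ} (hz : z ∈ annulus q)
    (hw : w ∈ annulus q) : annKer q z w * annKer q z (-w) = annWeightAltConv q 0 := by
  have hnorm : ‖z * starRingEnd ℂ w‖ = ‖z‖ * ‖w‖ := by simp
  have hlow : q ^ 2 < ‖z‖ * ‖w‖ := by nlinarith [hz.1, hw.1]
  have hup : ‖z‖ * ‖w‖ < 1 := by nlinarith [hz.2, hw.2, norm_nonneg z, norm_nonneg w]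
  have hu : z * starRingEnd ℂ w ≠ 0 := norm_pos_iff.mp (hnorm ▸ (pow_pos hq 2).trans hlow)
  rw [annKer_eq_laurentSum z w hu, annKer_neg_eq_laurentSum z w hu,
    (laurentSum_annWeight_mul_alt hq hq1 _ ?_).1, smul_eq_mul, mul_one]
  simpa only [Units.val_zpow_eq_zpow_val, Units.val_mk0, norm_zpow, hnorm] using
    summable_annWeight_mul_zpow hq hlow hup

theorem mul_annWeightAltConv_zero (hq : 0 < q) (hq1 : q < 1) {C' : ℝ}
    (hC' : ∀ z w : ℂ, z ∈ annulus q → w ∈ annulus q →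
      (C' : ℂ) * annKer q z w * annKer q z (-w) = 1) :
    C' * annWeightAltConv q 0 = 1 := by
  set x : ℂ := (((1 + q) / 2 : ℝ) : ℂ)
  have hxn : ‖x‖ = (1 + q) / 2 := by rw [Complex.norm_real, Real.norm_of_nonneg (by positivity)]
  have hx : x ∈ annulus q := ⟨by rw [hxn]; linarith, by rw [hxn]; linarith⟩
  have h := hC' x x hx hx
  rw [mul_assoc, annKer_mul_annKer_neg hq hq1 hx hx] at h
  exact_mod_cast h

end Kernel

section AnnulusSpectrum

variable {A : Type*} [NormedRing A] [NormedAlgebra ℂ A] {q : ℝ}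

lemma isUnit_of_spectrum_subset_annulus (hq : 0 ≤ q) {a : A} (ha : spectrum ℂ a ⊆ annulus q) :
    IsUnit a :=
  (spectrum.zero_notMem_iff ℂ).mp fun h => by simpa using hq.trans_lt (ha h).1

lemma spectrum_smul_inv_subset_ball (hq : 0 < q) {u : Aˣ} (hu : spectrum ℂ (u : A) ⊆ annulus q) :
    spectrum ℂ ((q : ℂ) • (↑u⁻¹ : A)) ⊆ Metric.ball 0 1 := by
  have hq' : (q : ℂ) ≠ 0 := by exact_mod_cast hq.ne'
  rw [← Units.smul_mk0 hq', spectrum.unit_smul_eq_smul, ← spectrum.map_inv]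
  rintro _ ⟨z, hz, rfl⟩
  have hz' := (hu (Set.mem_inv.mp hz)).1
  have hz0 : z ≠ 0 := by rintro rfl; simp at hz'; linarith
  rw [norm_inv, lt_inv_comm₀ hq (norm_pos_iff.mpr hz0)] at hz'
  simp only [smul_eq_mul, mem_ball_zero_iff, norm_mul, Units.val_mk0, Complex.norm_real,
    Real.norm_of_nonneg hq.le]
  calc q * ‖z‖ < q * q⁻¹ := by gcongr
    _ = 1 := mul_inv_cancel₀ hq.ne'

variable [CompleteSpace A]

theorem summable_annWeight_mul_norm_zpow_sq (hq : 0 < q) {u : Aˣ}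
    (hu : spectrum ℂ (u : A) ⊆ annulus q) :
    Summable fun n => annWeight q n * ‖(↑(u ^ n) : A)‖ ^ 2 := by
  refine summable_annWeight_mul hq (fun _ => by positivity) ?_ ?_
  · simpa only [zpow_natCast, Units.val_pow_eq_pow_val] using
      summable_norm_pow_sq_of_spectrum_subset_ball fun z hz => mem_ball_zero_iff.mpr (hu hz).2
  · refine (summable_norm_pow_sq_of_spectrum_subset_ball
      (spectrum_smul_inv_subset_ball hq hu)).congr fun k => ?_
    rw [smul_pow, norm_smul, norm_pow, Complex.norm_real, Real.norm_of_nonneg hq.le, zpow_neg,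
      zpow_natCast, ← inv_pow, Units.val_pow_eq_pow_val]
    ring

theorem summable_annWeight_mul_norm_conjStarHom_zpow [StarRing A] [NormedStarGroup A]
    (hq : 0 < q) {u : Aˣ} (hu : spectrum ℂ (u : A) ⊆ annulus q) :
    Summable fun n => annWeight q n * ‖(↑(Units.map (conjStarHom ℂ) u ^ n) : A →L[ℂ] A)‖ :=
  (summable_annWeight_mul_norm_zpow_sq hq hu).of_nonneg_of_le
    (fun n => mul_nonneg (annWeight_pos hq n).le (norm_nonneg _)) fun n => by
    rw [← map_zpow, Units.coe_map]
    exact mul_le_mul_of_nonneg_left (norm_conjStarHom_le _) (annWeight_pos hq n).le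

end AnnulusSpectrum

section HilbertSpace

variable {q : ℝ} {T : M →L[ℂ] M}

omit [CompleteSpace M] in
lemma zpowCLM_eq_coe_zpow (hT : IsUnit T) (n : ℤ) : zpowCLM T n = ↑(hT.unit ^ n) := by
  rcases le_or_gt 0 n with hn | hn
  · lift n to ℕ using hn
    rw [zpowCLM, if_pos (Int.natCast_nonneg n), Int.toNat_natCast, zpow_natCast,
      Units.val_pow_eq_pow_val, IsUnit.unit_spec]
  · obtain ⟨k, rfl⟩ : ∃ k : ℕ, n = -k := ⟨(-n).toNat, by omega⟩
    rw [zpowCLM, if_neg (by omega), neg_neg, Int.toNat_natCast, zpow_neg, zpow_natCast, ← inv_pow,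
      Units.val_pow_eq_pow_val, ← Ring.inverse_unit, IsUnit.unit_spec]

noncomputable def conjUnit (hT : IsUnit T) : ((M →L[ℂ] M) →L[ℂ] M →L[ℂ] M)ˣ :=
  Units.map (conjStarHom ℂ) hT.unit

lemma annOp_comp_comp_adjoint (hq : 0 < q) (hT : IsUnit T) (n : ℤ) (X : M →L[ℂ] M) :
    annOp q T n ∘L X ∘L adjoint (annOp q T n) =
      (annWeight q n : ℂ) • (↑(conjUnit hT ^ n) : (M →L[ℂ] M) →L[ℂ] M →L[ℂ] M) X := by
  have hsqrt : (√(1 + q ^ (2 * n)))⁻¹ * (√(1 + q ^ (2 * n)))⁻¹ = annWeight q n := by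
    rw [← mul_inv, Real.mul_self_sqrt (by positivity), annWeight]
  rw [conjUnit, ← map_zpow, Units.coe_map, conjStarHom_apply, ← zpowCLM_eq_coe_zpow,
    ← ContinuousLinearMap.star_eq_adjoint]
  change annOp q T n * X * star (annOp q T n) = _
  rw [annOp, star_smul, Complex.star_def, Complex.conj_ofReal, smul_mul_assoc, smul_mul_assoc,
    mul_smul_comm, smul_smul, ← Complex.ofReal_mul, hsqrt]

lemma summable_annWeight_mul_norm_conjUnit_zpow (hq : 0 < q) (hT : IsUnit T)
    (hσ : spectrum ℂ T ⊆ annulus q) :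
    Summable fun n => annWeight q n * ‖(↑(conjUnit hT ^ n) : (M →L[ℂ] M) →L[ℂ] M →L[ℂ] M)‖ :=
  summable_annWeight_mul_norm_conjStarHom_zpow hq (by rwa [hT.unit_spec])

lemma kerCal_eq_laurentSum_apply (hq : 0 < q) (hT : IsUnit T) (hσ : spectrum ℂ T ⊆ annulus q)
    (X : M →L[ℂ] M) :
    kerCal q T X = laurentSum (fun n => (annWeight q n : ℂ)) (conjUnit hT) X := by
  rw [laurentSum_apply _ (by simpa only [norm_annWeight hq] using
    summable_annWeight_mul_norm_conjUnit_zpow hq hT hσ), kerCal]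
  exact tsum_congr fun n => annOp_comp_comp_adjoint hq hT n X

lemma invkerCal_eq_laurentSum_apply (hq : 0 < q) (hT : IsUnit T) (hσ : spectrum ℂ T ⊆ annulus q)
    (C' : ℝ) (X : M →L[ℂ] M) :
    invkerCal q C' T X =
      ((C' : ℂ) • laurentSum (fun n => (-1 : ℂ) ^ n * annWeight q n) (conjUnit hT)) X := by
  rw [smul_apply, laurentSum_apply _ (by
    simpa only [norm_neg_one_zpow_mul_annWeight hq] using
      summable_annWeight_mul_norm_conjUnit_zpow hq hT hσ), invkerCal]
  congr 1
  exact tsum_congr fun n => by rw [annOp_comp_comp_adjoint hq hT, smul_smul]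

lemma summable_norm_annOp_comp_comp_adjoint (hq : 0 < q) (hσ : spectrum ℂ T ⊆ annulus q)
    (G : M →L[ℂ] M) : Summable fun n => ‖annOp q T n ∘L G ∘L adjoint (annOp q T n)‖ := by
  have hT := isUnit_of_spectrum_subset_annulus hq.le hσ
  refine ((summable_annWeight_mul_norm_conjUnit_zpow hq hT hσ).mul_right ‖G‖).of_nonneg_of_le
    (fun _ => norm_nonneg _) fun n => ?_
  rw [annOp_comp_comp_adjoint hq hT, norm_smul, norm_annWeight hq, mul_assoc]
  exact mul_le_mul_of_nonneg_left (le_opNorm _ _) (annWeight_pos hq n).le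

end HilbertSpace

theorem stmt4_general (q : ℝ) (hq : q ∈ Set.Ioo (0 : ℝ) 1)
    (C' : ℝ)
    (hC' : ∀ z w : ℂ, z ∈ annulus q → w ∈ annulus q →
      (C' : ℂ) * annKer q z w * annKer q z (-w) = 1)
    (T : M →L[ℂ] M) (hT : spectrum ℂ T ⊆ annulus q)
    (G : M →L[ℂ] M) :
    Summable (fun n : ℤ => ‖annOp q T n ∘L G ∘L adjoint (annOp q T n)‖) ∧
    Summable (fun n : ℤ =>
      ‖(C' : ℂ) • (((-1 : ℂ) ^ n) • (annOp q T n ∘L G ∘L adjoint (annOp q T n)))‖) ∧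
    kerCal q T (invkerCal q C' T G) = G ∧
    invkerCal q C' T (kerCal q T G) = G := by
  obtain ⟨hq0, hq1⟩ := hq
  have hU : IsUnit T := isUnit_of_spectrum_subset_annulus hq0.le hT
  set K := laurentSum (fun n => (annWeight q n : ℂ)) (conjUnit hU)
  set L := laurentSum (fun n => (-1 : ℂ) ^ n * annWeight q n) (conjUnit hU)
  obtain ⟨hKL, hLK⟩ :
      K * L = (annWeightAltConv q 0 : ℂ) • 1 ∧ L * K = (annWeightAltConv q 0 : ℂ) • 1 :=
    laurentSum_annWeight_mul_alt hq0 hq1 _ (summable_annWeight_mul_norm_conjUnit_zpow hq0 hU hT)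
  have hC : (C' : ℂ) * annWeightAltConv q 0 = 1 := by
    exact_mod_cast mul_annWeightAltConv_zero hq0 hq1 hC'
  have hS := summable_norm_annOp_comp_comp_adjoint hq0 hT G
  refine ⟨hS, (hS.mul_left ‖(C' : ℂ)‖).congr fun n => by simp [norm_smul], ?_, ?_⟩
  · rw [invkerCal_eq_laurentSum_apply hq0 hU hT, kerCal_eq_laurentSum_apply hq0 hU hT, smul_apply,
      map_smul, ← mul_apply_eq_comp K L, hKL, smul_apply, one_apply_eq_self, smul_smul, hC,
      one_smul]
  · rw [kerCal_eq_laurentSum_apply hq0 hU hT, invkerCal_eq_laurentSum_apply hq0 hU hT, smul_apply,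
      ← mul_apply_eq_comp L K, hLK, smul_apply, one_apply_eq_self, smul_smul, hC, one_smul]

/-- Both series converge absolutely in operator norm, and
`k(T,T^*)((1/k)(T,T^*)(G)) = G` and `(1/k)(T,T^*)(k(T,T^*)(G)) = G`. -/
theorem stmt4 (q : ℝ) (hq : q ∈ Set.Ioo (0 : ℝ) 1)
    (C' : ℝ) (hC'pos : 0 < C')
    (hC' : ∀ z w : ℂ, z ∈ annulus q → w ∈ annulus q →
      (C' : ℂ) * annKer q z w * annKer q z (-w) = 1)
    (T : M →L[ℂ] M) (hT : spectrum ℂ T ⊆ annulus q)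
    (G : M →L[ℂ] M) :
    Summable (fun n : ℤ => ‖annOp q T n ∘L G ∘L adjoint (annOp q T n)‖) ∧
    Summable (fun n : ℤ =>
      ‖(C' : ℂ) • (((-1 : ℂ) ^ n) • (annOp q T n ∘L G ∘L adjoint (annOp q T n)))‖) ∧
    kerCal q T (invkerCal q C' T G) = G ∧
    invkerCal q C' T (kerCal q T G) = G :=
  stmt4_general q hq C' hC' T hT G
end

section
/- If (G_i) is a net of bounded operators on M which is bounded in operator norm and converges to G in the weak operator topology, then k(T,T*)(G_i) converges to k(T,T*)(G) in the weak operator topology, and (1/k)(T,T*)(G_i) converges to (1/k)(T,T*)(G) in the weak operator topology. -/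
/-!
The weights satisfy `(1 + q^{2n})^{-1/2} ≤ min 1 q^{-n}`, and Gelfand's formula applied to `T`
(spectrum in the unit disc) and to `T⁻¹` (spectrum in the disc of radius `q⁻¹`) shows that
`‖T_n‖` decays geometrically as `n → ±∞`; hence `∑ ‖T_n‖² < ∞`. Each term
`⟪T_n G_i T_n* x, y⟫ = ⟪G_i T_n* x, T_n* y⟫` converges along the net and is dominated by
`‖T_n‖² C ‖x‖ ‖y‖`, so Tannery's theorem passes the limit through the series.
-/

open ContinuousLinearMap

variable {M : Type*} [NormedAddCommGroup M] [InnerProductSpace ℂ M] [CompleteSpace M]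

open Filter Topology

open scoped InnerProductSpace

theorem exists_eventually_norm_pow_le_of_spectrum_subset_ball {A : Type*} [NormedRing A]
    [NormedAlgebra ℂ A] [CompleteSpace A] {a : A} {R : ℝ} (hR : 0 < R)
    (ha : spectrum ℂ a ⊆ Metric.ball 0 R) :
    ∃ r ∈ Set.Ioo 0 R, ∀ᶠ n : ℕ in atTop, ‖a ^ n‖ ≤ r ^ n := by
  obtain ⟨r', ⟨hr'0, hr'R⟩, hsub⟩ := exists_pos_lt_subset_ball hR (spectrum.isClosed a) ha
  obtain ⟨r, hr'r, hrR⟩ := exists_between hr'R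
  have hr0 : 0 < r := hr'0.trans hr'r
  have hrad : spectralRadius ℂ a < ENNReal.ofReal r := by
    refine lt_of_le_of_lt (iSup₂_le fun z hz => ?_) ((ENNReal.ofReal_lt_ofReal_iff hr0).2 hr'r)
    rw [← enorm_eq_nnnorm, ← ofReal_norm]
    exact ENNReal.ofReal_le_ofReal (mem_ball_zero_iff.1 (hsub hz)).le
  refine ⟨r, ⟨hr0, hrR⟩, ?_⟩
  filter_upwards [(spectrum.pow_norm_pow_one_div_tendsto_nhds_spectralRadius a).eventually_lt_const
    hrad, eventually_ge_atTop 1] with n hn hn1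
  have hroot := (ENNReal.ofReal_lt_ofReal_iff hr0).1 hn
  rw [one_div, Real.rpow_inv_lt_iff_of_pos (norm_nonneg _) hr0.le (by exact_mod_cast hn1),
    Real.rpow_natCast] at hroot
  exact hroot.le

theorem spectrum_ringInverse_subset_ball {𝕜 A : Type*} [NormedField 𝕜] [Ring A] [Algebra 𝕜 A]
    {a : A} {r : ℝ} (hr : 0 < r) (ha : ∀ z ∈ spectrum 𝕜 a, r < ‖z‖) :
    spectrum 𝕜 (Ring.inverse a) ⊆ Metric.ball 0 r⁻¹ := by
  obtain ⟨u, rfl⟩ : IsUnit a :=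
    spectrum.isUnit_of_zero_notMem 𝕜 fun h0 => by simpa [hr.le.not_gt] using ha 0 h0
  intro z hz
  rw [Ring.inverse_unit, ← spectrum.map_inv, Set.mem_inv] at hz
  have hz' : r < ‖z‖⁻¹ := norm_inv z ▸ ha _ hz
  exact mem_ball_zero_iff.2 ((lt_inv_comm₀ hr (inv_pos.1 (hr.trans hz'))).1 hz')

theorem summable_sq_of_eventually_norm_le_pow {f : ℕ → ℝ} {r : ℝ} (hr0 : 0 ≤ r) (hr1 : r < 1)
    (hf : ∀ᶠ n in atTop, ‖f n‖ ≤ r ^ n) : Summable fun n => f n ^ 2 := by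
  refine Summable.of_norm_bounded_eventually_nat
    (summable_geometric_of_lt_one (sq_nonneg r) (by nlinarith)) ?_
  filter_upwards [hf] with n hn
  rw [norm_pow, ← pow_mul, mul_comm, pow_mul]
  exact pow_le_pow_left₀ (norm_nonneg _) hn 2

section Weights

variable {E : Type*} [NormedAddCommGroup E] [InnerProductSpace ℂ E]

theorem zpowCLM_natCast (T : E →L[ℂ] E) (n : ℕ) : zpowCLM T n = T ^ n := by
  simp [zpowCLM]

theorem zpowCLM_neg_natCast (T : E →L[ℂ] E) (n : ℕ) : zpowCLM T (-n) = Ring.inverse T ^ n := by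
  rcases n.eq_zero_or_pos with rfl | hn
  · simp [zpowCLM]
  · rw [zpowCLM, if_neg (by omega), neg_neg, Int.toNat_natCast]

theorem norm_annOp (q : ℝ) (T : E →L[ℂ] E) (n : ℤ) :
    ‖annOp q T n‖ = (Real.sqrt (1 + q ^ (2 * n)))⁻¹ * ‖zpowCLM T n‖ := by
  rw [annOp, norm_smul, Complex.norm_real, Real.norm_of_nonneg (by positivity)]

theorem norm_annOp_natCast_le (q : ℝ) (T : E →L[ℂ] E) (n : ℕ) : ‖annOp q T n‖ ≤ ‖T ^ n‖ := by
  rw [norm_annOp, zpowCLM_natCast]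
  refine mul_le_of_le_one_left (norm_nonneg _) (inv_le_one_of_one_le₀ ?_)
  exact Real.one_le_sqrt.2 (le_add_of_nonneg_right ((even_two_mul _).zpow_nonneg q))

theorem norm_annOp_neg_natCast_le {q : ℝ} (hq : 0 < q) (T : E →L[ℂ] E) (n : ℕ) :
    ‖annOp q T (-n)‖ ≤ q ^ n * ‖Ring.inverse T ^ n‖ := by
  rw [norm_annOp, zpowCLM_neg_natCast]
  refine mul_le_mul_of_nonneg_right (inv_le_of_inv_le₀ (pow_pos hq n) ?_) (norm_nonneg _)
  refine Real.le_sqrt_of_sq_le ?_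
  have hsq : ((q ^ n)⁻¹) ^ 2 = q ^ (2 * -(n : ℤ)) := by simp [zpow_mul, ← pow_mul, mul_comm]
  linarith

end Weights

theorem summable_norm_annOp_sq {q : ℝ} (hq : q ∈ Set.Ioo 0 1) {T : M →L[ℂ] M}
    (hT : spectrum ℂ T ⊆ annulus q) : Summable fun n : ℤ => ‖annOp q T n‖ ^ 2 := by
  obtain ⟨ρ, ⟨hρ0, hρ1⟩, hT_pow⟩ := exists_eventually_norm_pow_le_of_spectrum_subset_ball one_pos
    fun z hz => mem_ball_zero_iff.2 (hT hz).2
  obtain ⟨σ, ⟨hσ0, hσq⟩, hTinv_pow⟩ := exists_eventually_norm_pow_le_of_spectrum_subset_ball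
    (inv_pos.2 hq.1) (spectrum_ringInverse_subset_ball hq.1 fun z hz => (hT hz).1)
  have hqσ : q * σ < 1 := by simpa [hq.1.ne'] using mul_lt_mul_of_pos_left hσq hq.1
  refine Summable.of_nat_of_neg (summable_sq_of_eventually_norm_le_pow hρ0.le hρ1 ?_)
    (summable_sq_of_eventually_norm_le_pow (mul_pos hq.1 hσ0).le hqσ ?_)
  · filter_upwards [hT_pow] with n hn
    exact (norm_norm _).trans_le ((norm_annOp_natCast_le q T n).trans hn)
  · filter_upwards [hTinv_pow] with n hn
    rw [norm_norm, mul_pow]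
    exact (norm_annOp_neg_natCast_le hq.1 T n).trans
      (mul_le_mul_of_nonneg_left hn (pow_nonneg hq.1.le n))

theorem norm_comp_comp_le {𝕜 E F G H : Type*} [NontriviallyNormedField 𝕜]
    [SeminormedAddCommGroup E] [SeminormedAddCommGroup F] [SeminormedAddCommGroup G]
    [SeminormedAddCommGroup H] [NormedSpace 𝕜 E] [NormedSpace 𝕜 F] [NormedSpace 𝕜 G]
    [NormedSpace 𝕜 H] (A : G →L[𝕜] H) (S : F →L[𝕜] G) (B : E →L[𝕜] F) :
    ‖A ∘L S ∘L B‖ ≤ ‖A‖ * ‖S‖ * ‖B‖ :=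
  (opNorm_comp_le _ _).trans <| by
    rw [mul_assoc]; exact mul_le_mul_of_nonneg_left (opNorm_comp_le _ _) (norm_nonneg _)

section WeakOperatorTopology

variable {β ι : Type*}

theorem summable_comp_comp {A B : β → M →L[ℂ] M} (hAB : Summable fun n => ‖A n‖ * ‖B n‖)
    (G : M →L[ℂ] M) : Summable fun n => A n ∘L G ∘L B n :=
  Summable.of_norm_bounded (hAB.mul_right ‖G‖) fun _ =>
    (norm_comp_comp_le _ _ _).trans_eq (mul_right_comm _ _ _)

theorem inner_tsum_apply {E F : Type*} [NormedAddCommGroup E] [NormedSpace ℂ E]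
    [NormedAddCommGroup F] [InnerProductSpace ℂ F] {f : β → E →L[ℂ] F} (hf : Summable f)
    (x : E) (y : F) : ⟪(∑' n, f n) x, y⟫_ℂ = ∑' n, ⟪f n x, y⟫_ℂ :=
  ((innerSLFlip ℂ y).comp (ContinuousLinearMap.apply ℂ F x)).map_tsum hf

theorem tendsto_inner_tsum_comp_comp {l : Filter ι} {A B : β → M →L[ℂ] M}
    (hAB : Summable fun n => ‖A n‖ * ‖B n‖) {Gnet : ι → M →L[ℂ] M} {G : M →L[ℂ] M}
    (hbdd : ∃ C : ℝ, ∀ i, ‖Gnet i‖ ≤ C)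
    (hwot : ∀ x y : M, Tendsto (fun i => ⟪Gnet i x, y⟫_ℂ) l (𝓝 ⟪G x, y⟫_ℂ)) (x y : M) :
    Tendsto (fun i => ⟪(∑' n, A n ∘L Gnet i ∘L B n) x, y⟫_ℂ) l
      (𝓝 ⟪(∑' n, A n ∘L G ∘L B n) x, y⟫_ℂ) := by
  obtain ⟨C, hC⟩ := hbdd
  simp only [inner_tsum_apply (summable_comp_comp hAB _)]
  refine tendsto_tsum_of_dominated_convergence (hAB.mul_right (C * ‖x‖ * ‖y‖)) (fun n => ?_)
    (Eventually.of_forall fun i n => ?_)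
  · simpa only [comp_apply, adjoint_inner_right] using hwot (B n x) (adjoint (A n) y)
  · calc ‖⟪(A n ∘L Gnet i ∘L B n) x, y⟫_ℂ‖ ≤ ‖A n ∘L Gnet i ∘L B n‖ * ‖x‖ * ‖y‖ :=
          (norm_inner_le_norm _ _).trans (by gcongr; exact le_opNorm _ _)
      _ ≤ ‖A n‖ * C * ‖B n‖ * ‖x‖ * ‖y‖ := by
          gcongr
          exact (norm_comp_comp_le _ _ _).trans (by gcongr; exact hC i)
      _ = ‖A n‖ * ‖B n‖ * (C * ‖x‖ * ‖y‖) := by ring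

end WeakOperatorTopology

theorem stmt5_general (q : ℝ) (hq : q ∈ Set.Ioo (0 : ℝ) 1)
    (C' : ℝ)
    (T : M →L[ℂ] M) (hT : spectrum ℂ T ⊆ annulus q)
    {ι : Type*} (l : Filter ι) (Gnet : ι → (M →L[ℂ] M)) (G : M →L[ℂ] M)
    (hbdd : ∃ C : ℝ, ∀ i : ι, ‖Gnet i‖ ≤ C)
    (hwot : ∀ x y : M,
      Filter.Tendsto (fun i => (inner ℂ (Gnet i x) y : ℂ)) l (nhds (inner ℂ (G x) y))) :
    (∀ x y : M,
      Filter.Tendsto (fun i => (inner ℂ (kerCal q T (Gnet i) x) y : ℂ)) l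
        (nhds (inner ℂ (kerCal q T G x) y))) ∧
    (∀ x y : M,
      Filter.Tendsto (fun i => (inner ℂ (invkerCal q C' T (Gnet i) x) y : ℂ)) l
        (nhds (inner ℂ (invkerCal q C' T G x) y))) := by
  have hsum : Summable fun n : ℤ => ‖annOp q T n‖ * ‖adjoint (annOp q T n)‖ := by
    simpa only [LinearIsometryEquiv.norm_map, ← sq] using summable_norm_annOp_sq hq hT
  have hsum_alt : Summable fun n : ℤ =>
      ‖((-1 : ℂ) ^ n) • annOp q T n‖ * ‖adjoint (annOp q T n)‖ := by
    simpa only [norm_smul, norm_zpow, norm_neg, norm_one, one_zpow, one_mul] using hsum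
  refine ⟨tendsto_inner_tsum_comp_comp hsum hbdd hwot, fun x y => ?_⟩
  simp only [invkerCal, ← smul_comp, smul_apply, inner_smul_left]
  exact (tendsto_inner_tsum_comp_comp hsum_alt hbdd hwot x y).const_mul _

/-- WOT-continuity of the maps `G ↦ k(T,T^*)(G)` and `G ↦ (1/k)(T,T^*)(G)` on
norm-bounded nets: if a norm-bounded net `Gnet` converges to `G` in the weak
operator topology, so do `k(T,T^*)(Gnet i)` to `k(T,T^*)(G)` and
`(1/k)(T,T^*)(Gnet i)` to `(1/k)(T,T^*)(G)`. -/
theorem stmt5 (q : ℝ) (hq : q ∈ Set.Ioo (0 : ℝ) 1)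
    (C' : ℝ) (hC'pos : 0 < C')
    (hC' : ∀ z w : ℂ, z ∈ annulus q → w ∈ annulus q →
      (C' : ℂ) * annKer q z w * annKer q z (-w) = 1)
    (T : M →L[ℂ] M) (hT : spectrum ℂ T ⊆ annulus q)
    {ι : Type*} (l : Filter ι) (Gnet : ι → (M →L[ℂ] M)) (G : M →L[ℂ] M)
    (hbdd : ∃ C : ℝ, ∀ i : ι, ‖Gnet i‖ ≤ C)
    (hwot : ∀ x y : M,
      Filter.Tendsto (fun i => (inner ℂ (Gnet i x) y : ℂ)) l (nhds (inner ℂ (G x) y))) :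
    (∀ x y : M,
      Filter.Tendsto (fun i => (inner ℂ (kerCal q T (Gnet i) x) y : ℂ)) l
        (nhds (inner ℂ (kerCal q T G x) y))) ∧
    (∀ x y : M,
      Filter.Tendsto (fun i => (inner ℂ (invkerCal q C' T (Gnet i) x) y : ℂ)) l
        (nhds (inner ℂ (invkerCal q C' T G x) y))) :=
  stmt5_general q hq C' T hT l Gnet G hbdd hwot
end

section
/- If R : M → H is a bounded operator satisfying ∑_{n∈ℤ} ‖R T_n* h‖² = ‖h‖² for every h ∈ M, then Vh := (R T_n* h)_{n∈ℤ} defines an isometry V : M → ℓ²(ℤ,H) satisfying V∘T* = S_H*∘V (a lifting of T); moreover, for every m ∈ ℤ and g ∈ H one has V*(e_m g) = T_m R* g, where e_m g ∈ ℓ²(ℤ,H) denotes the sequence equal to g at index m and 0 at every other index. -/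
/-!
`V` is the map `h ↦ (R T_n^* h)_n`, an isometry into `ℓ²(ℤ, H)` by the hypothesis on `R`, and
`V^*(e_m g) = T_m R^* g` is the adjoint of its `m`-th coordinate `R T_m^*`. Since `0` is not in
the annulus, `T` is a unit, so `T_n` is a multiple of the group power `T^n` and
`T T_n = w_{n+1} T_{n+1}`, where `w_n` is the weight of the shift `S`. Taking adjoints, the
`n`-th coordinate of `V T^* h` is `w_{n+1}` times the `(n+1)`-st coordinate of `V h`, which is
exactly how the adjoint of a weighted shift acts.
-/

open ContinuousLinearMap

variable {M : Type*} [NormedAddCommGroup M] [InnerProductSpace ℂ M] [CompleteSpace M]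

variable {H : Type*} [NormedAddCommGroup H] [InnerProductSpace ℂ H] [CompleteSpace H]

section LpCoordinates

variable {𝕜 ι E F : Type*} [RCLike 𝕜]

theorem memℓp_two_of_hasSum_norm_sq [NormedAddCommGroup F] {f : ι → F} {s : ℝ}
    (hf : HasSum (fun i => ‖f i‖ ^ 2) s) : Memℓp f 2 :=
  memℓp_gen (by simpa using hf.summable)

theorem lp.hasSum_norm_sq [NormedAddCommGroup F] (f : lp (fun _ : ι => F) 2) :
    HasSum (fun i => ‖f i‖ ^ 2) (‖f‖ ^ 2) := by
  simpa using lp.hasSum_norm (p := 2) (by norm_num) f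

noncomputable def lpIsometryOfHasSumNormSq [SeminormedAddCommGroup E] [NormedSpace 𝕜 E]
    [NormedAddCommGroup F] [NormedSpace 𝕜 F] (A : ι → E →L[𝕜] F)
    (hA : ∀ x, HasSum (fun i => ‖A i x‖ ^ 2) (‖x‖ ^ 2)) : E →ₗᵢ[𝕜] lp (fun _ : ι => F) 2 where
  toFun x := ⟨fun i => A i x, memℓp_two_of_hasSum_norm_sq (hA x)⟩
  map_add' x y := lp.ext <| funext fun i => map_add (A i) x y
  map_smul' c x := lp.ext <| funext fun i => map_smul (A i) c x
  norm_map' x := (sq_eq_sq₀ (norm_nonneg _) (norm_nonneg _)).mp <|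
    (lp.hasSum_norm_sq _).unique (hA x)

theorem adjoint_apply_lp_single [NormedAddCommGroup E] [InnerProductSpace 𝕜 E] [CompleteSpace E]
    [NormedAddCommGroup F] [InnerProductSpace 𝕜 F] [CompleteSpace F] [DecidableEq ι]
    {V : E →L[𝕜] lp (fun _ : ι => F) 2} {A : ι → E →L[𝕜] F} (hV : ∀ x i, V x i = A i x)
    (i : ι) (y : F) : adjoint V (lp.single 2 i y) = adjoint (A i) y :=
  ext_inner_right 𝕜 fun x => by
    rw [adjoint_inner_left, lp.inner_single_left, hV, adjoint_inner_left]

end LpCoordinates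

section WeightedShift

variable {𝕜 G : Type*} [RCLike 𝕜] [NormedAddCommGroup G] [InnerProductSpace 𝕜 G]
  {w : ℤ → 𝕜} {S : lp (fun _ : ℤ => G) 2 →L[𝕜] lp (fun _ : ℤ => G) 2}

theorem weightedShift_lp_single (hS : ∀ x n, S x n = w n • x (n - 1)) (n : ℤ) (y : G) :
    S (lp.single 2 n y) = lp.single 2 (n + 1) (w (n + 1) • y) := by
  ext m
  rw [hS]
  rcases eq_or_ne m (n + 1) with rfl | hm
  · rw [add_sub_cancel_right, lp.single_apply_self, lp.single_apply_self]
  · rw [lp.single_apply_ne _ _ _ hm, lp.single_apply_ne _ _ _ (by omega), smul_zero]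

theorem adjoint_weightedShift_apply [CompleteSpace G] (hS : ∀ x n, S x n = w n • x (n - 1))
    (y : lp (fun _ : ℤ => G) 2) (n : ℤ) :
    adjoint S y n = starRingEnd 𝕜 (w (n + 1)) • y (n + 1) :=
  ext_inner_left 𝕜 fun z => by
    refine (lp.inner_single_left (G := fun _ : ℤ => G) n z _).symm.trans ?_
    rw [adjoint_inner_right, weightedShift_lp_single hS, lp.inner_single_left, inner_smul_left,
      inner_smul_right]

end WeightedShift

theorem isUnit_of_spectrum_subset_annulus_s7 {A : Type*} [Ring A] [Algebra ℂ A] {q : ℝ}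
    (hq : 0 ≤ q) {T : A} (hT : spectrum ℂ T ⊆ annulus q) : IsUnit T :=
  (spectrum.zero_notMem_iff ℂ).mp fun h0 => by simpa [annulus, hq.not_gt] using hT h0

section AnnulusOperators

variable {E : Type*} [NormedAddCommGroup E] [InnerProductSpace ℂ E]

theorem zpowCLM_units_val (u : (E →L[ℂ] E)ˣ) (n : ℤ) :
    zpowCLM (u : E →L[ℂ] E) n = ↑(u ^ n) := by
  unfold zpowCLM
  split_ifs with h
  · rw [← Units.val_pow_eq_pow_val, ← zpow_natCast, Int.toNat_of_nonneg h]
  · rw [Ring.inverse_unit, ← Units.val_pow_eq_pow_val, ← zpow_natCast,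
      Int.toNat_of_nonneg (by omega), zpow_neg, inv_zpow, inv_inv]

noncomputable def shiftWeight (q : ℝ) (n : ℤ) : ℝ :=
  √((1 + q ^ (2 * n)) / (1 + q ^ (2 * n - 2)))

theorem one_add_zpow_two_mul_pos (q : ℝ) (n : ℤ) : 0 < 1 + q ^ (2 * n) := by
  have := (even_two_mul n).zpow_nonneg q
  linarith

theorem shiftWeight_succ_mul_inv_sqrt (q : ℝ) (n : ℤ) :
    shiftWeight q (n + 1) * (√(1 + q ^ (2 * (n + 1))))⁻¹ = (√(1 + q ^ (2 * n)))⁻¹ := by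
  rw [shiftWeight, show 2 * (n + 1) - 2 = 2 * n by ring,
    Real.sqrt_div' _ (one_add_zpow_two_mul_pos q n).le, div_mul_eq_mul_div,
    mul_inv_cancel₀ (Real.sqrt_pos.mpr (one_add_zpow_two_mul_pos q _)).ne', one_div]

theorem units_comp_annOp (q : ℝ) (u : (E →L[ℂ] E)ˣ) (n : ℤ) :
    (u : E →L[ℂ] E) ∘L annOp q u n = (shiftWeight q (n + 1) : ℂ) • annOp q u (n + 1) := by
  simp only [annOp, zpowCLM_units_val, comp_smul, smul_smul, ← Complex.ofReal_mul,
    shiftWeight_succ_mul_inv_sqrt, ← mul_self_zpow, Units.val_mul]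
  rfl

theorem adjoint_annOp_apply_adjoint_units [CompleteSpace E] (q : ℝ) (u : (E →L[ℂ] E)ˣ) (n : ℤ)
    (x : E) :
    adjoint (annOp q u n) (adjoint (u : E →L[ℂ] E) x) =
      (shiftWeight q (n + 1) : ℂ) • adjoint (annOp q u (n + 1)) x := by
  rw [← comp_apply, ← adjoint_comp, units_comp_annOp, ← star_eq_adjoint, ← star_eq_adjoint,
    star_smul, Complex.star_def, Complex.conj_ofReal]
  rfl

end AnnulusOperators

/-- If `R : M → H` satisfies `∑_{n ∈ ℤ} ‖R T_n^* h‖² = ‖h‖²` for all `h`, then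
`Vh := (R T_n^* h)_{n ∈ ℤ}` defines an isometric lifting of `T`, and
`V^*(e_m g) = T_m R^* g` for all `m ∈ ℤ`, `g ∈ H`. -/
theorem stmt7 (q : ℝ) (hq : q ∈ Set.Ioo (0 : ℝ) 1)
    (T : M →L[ℂ] M) (hT : spectrum ℂ T ⊆ annulus q)
    (S : lp (fun _ : ℤ => H) 2 →L[ℂ] lp (fun _ : ℤ => H) 2)
    (hS : ∀ (x : lp (fun _ : ℤ => H) 2) (n : ℤ),
      (S x) n = ((Real.sqrt ((1 + q ^ (2 * n)) / (1 + q ^ (2 * n - 2))) : ℝ) : ℂ) • x (n - 1))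
    (R : M →L[ℂ] H)
    (hR : ∀ h : M, HasSum (fun n : ℤ => ‖R (adjoint (annOp q T n) h)‖ ^ 2) (‖h‖ ^ 2)) :
    ∃ V : M →L[ℂ] lp (fun _ : ℤ => H) 2,
      (∀ (h : M) (n : ℤ), (V h) n = R (adjoint (annOp q T n) h)) ∧
      Isometry V ∧
      V ∘L adjoint T = adjoint S ∘L V ∧
      (∀ (m : ℤ) (g : H), adjoint V (lp.single 2 m g) = annOp q T m (adjoint R g)) := by
  obtain ⟨u, rfl⟩ := isUnit_of_spectrum_subset_annulus_s7 hq.1.le hT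
  let A n := R ∘L adjoint (annOp q u n)
  let V := (lpIsometryOfHasSumNormSq A hR).toContinuousLinearMap
  have hV : ∀ h n, V h n = R (adjoint (annOp q u n) h) := fun _ _ => rfl
  refine ⟨V, hV, LinearIsometry.isometry _, ?_, fun m g => ?_⟩
  · ext h n
    rw [comp_apply, comp_apply,
      adjoint_weightedShift_apply (w := fun n => (shiftWeight q n : ℂ)) hS, hV, hV,
      adjoint_annOp_apply_adjoint_units, map_smul, Complex.conj_ofReal]
  · rw [adjoint_apply_lp_single (A := A) hV, adjoint_comp, adjoint_adjoint]
    rfl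
end

section
/- If F : 𝕋 → M and G : 𝕋 → M are both ν-admissible, then the net (P,S) ↦ ⟨F(P,S), G(P,S)⟩_ν converges: there exists L ∈ ℂ such that for every ε > 0 there is a finite Borel partition Q of 𝕋 with |⟨F(P,S), G(P,S)⟩_ν − L| < ε for every tagged partition (P,S) whose partition P refines Q. Moreover, every measurable simple function H = ∑_j 1_{ω_j}·c_j (where (ω_j) is a finite Borel partition of 𝕋 and c_j ∈ M) is ν-admissible. -/
/-!
For a positive operator `T`, `(x, y) ↦ ⟪T x, y⟫` is a semi-inner product, so Cauchy–Schwarz holds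
for it. Evaluating `⟨F(P,S), G(P,S)⟩_ν` and `⟨F(P',S'), G(P',S')⟩_ν` on the common refinement of
`P` and `P'` (finite additivity of `ν`) and splitting the difference of the summands, one gets
`|⟨F(P,S), G(P,S)⟩_ν - ⟨F(P',S'), G(P',S')⟩_ν| ≤ ‖F(P,S) - F(P',S')‖_ν ‖G(P,S)‖_ν
  + ‖F(P',S')‖_ν ‖G(P,S) - G(P',S')‖_ν`,
so admissibility of `F` and `G` makes the net Cauchy along refinement, and it converges because
`ℂ` is complete. A simple function is constant on the pieces of its partition, so its cross
distances vanish on refinements of that partition, and `‖H(P,S)‖_ν² ≤ ∑_j ⟨ν(𝕋) c_j, c_j⟩`.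
-/

open ContinuousLinearMap

/-- The unit circle `𝕋 ⊆ ℂ` as a type, with its Borel σ-algebra (induced from `ℂ`). -/
abbrev Torus : Type := ↥(Metric.sphere (0 : ℂ) 1)

/-- A finite Borel partition of `X`. -/
structure BorelPartition (X : Type*) [MeasurableSpace X] where
  n : ℕ
  piece : Fin n → Set X
  meas : ∀ i, MeasurableSet (piece i)
  disj : Pairwise (Function.onFun Disjoint piece)
  cover : (⋃ i, piece i) = Set.univ

/-- A tagged finite Borel partition of `X`: a finite Borel partition together
with a tag `tag i ∈ piece i` for each piece. -/
structure TaggedPartition (X : Type*) [MeasurableSpace X] where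
  n : ℕ
  piece : Fin n → Set X
  meas : ∀ i, MeasurableSet (piece i)
  disj : Pairwise (Function.onFun Disjoint piece)
  cover : (⋃ i, piece i) = Set.univ
  tag : Fin n → X
  tag_mem : ∀ i, tag i ∈ piece i

/-- The (untagged) partition of a tagged partition `P` refines `Q`. -/
def TaggedPartition.Refines {X : Type*} [MeasurableSpace X]
    (P : TaggedPartition X) (Q : BorelPartition X) : Prop :=
  ∀ i : Fin P.n, ∃ j : Fin Q.n, P.piece i ⊆ Q.piece j

variable {M : Type*} [NormedAddCommGroup M] [InnerProductSpace ℂ M] [CompleteSpace M]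

/-- An operator-valued measure on `X`: positive operator values on Borel sets and
weak countable additivity. -/
structure OpMeasure (X : Type*) [MeasurableSpace X] (M : Type*) [NormedAddCommGroup M]
    [InnerProductSpace ℂ M] [CompleteSpace M] where
  toFun : Set X → (M →L[ℂ] M)
  pos : ∀ ω : Set X, MeasurableSet ω → (toFun ω).IsPositive
  countably_additive : ∀ (e f : M) (g : ℕ → Set X), (∀ k, MeasurableSet (g k)) →
    Pairwise (Function.onFun Disjoint g) →
    HasSum (fun k => (inner ℂ (toFun (g k) e) f : ℂ)) (inner ℂ (toFun (⋃ k, g k) e) f)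

/-- `⟨F(P,S), G(P,S)⟩_ν := ∑_j ⟨ν(ω_j) F(s_j), G(s_j)⟩`. -/
noncomputable def pairSumNu {X : Type*} [MeasurableSpace X]
    (ν : Set X → (M →L[ℂ] M)) (P : TaggedPartition X) (F G : X → M) : ℂ :=
  ∑ i : Fin P.n, (inner ℂ (ν (P.piece i) (F (P.tag i))) (G (P.tag i)) : ℂ)

/-- `‖F(P,S)‖_ν²`. -/
noncomputable def normSqNu {X : Type*} [MeasurableSpace X]
    (ν : Set X → (M →L[ℂ] M)) (P : TaggedPartition X) (F : X → M) : ℝ :=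
  (pairSumNu ν P F F).re

/-- `‖F(P,S) − F(P′,S′)‖_ν²` (the mixed-refinement square distance). -/
noncomputable def crossSqNu {X : Type*} [MeasurableSpace X]
    (ν : Set X → (M →L[ℂ] M)) (P P' : TaggedPartition X) (F : X → M) : ℝ :=
  ∑ i : Fin P.n, ∑ j : Fin P'.n,
    ((inner ℂ (ν (P.piece i ∩ P'.piece j) (F (P.tag i) - F (P'.tag j)))
        (F (P.tag i) - F (P'.tag j)) : ℂ)).re

/-- `F` is ν-admissible: the net of simple approximants `F(P,S)` is bounded and
Cauchy in the ν-seminorm. -/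
def NuAdmissible {X : Type*} [MeasurableSpace X]
    (ν : Set X → (M →L[ℂ] M)) (F : X → M) : Prop :=
  (∃ C : ℝ, ∀ P : TaggedPartition X, Real.sqrt (normSqNu ν P F) ≤ C) ∧
  ∀ ε : ℝ, 0 < ε → ∃ Q : BorelPartition X, ∀ P P' : TaggedPartition X,
    P.Refines Q → P'.Refines Q → Real.sqrt (crossSqNu ν P P' F) < ε

open Filter Topology MeasureTheory

namespace ContinuousLinearMap.IsPositive

variable {𝕜 E : Type*} [RCLike 𝕜] [NormedAddCommGroup E] [InnerProductSpace 𝕜 E]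
  {T : E →L[𝕜] E}

@[reducible] def preInnerProductCore (hT : T.IsPositive) : PreInnerProductSpace.Core 𝕜 E where
  inner x y := inner 𝕜 (T x) y
  conj_inner_symm x y := by
    rw [inner_conj_symm, hT.inner_left_eq_inner_right]
  re_inner_nonneg := hT.re_inner_nonneg_left
  add_left x y z := by simp only [map_add, inner_add_left]
  smul_left x y r := by simp only [map_smul, inner_smul_left]

theorem norm_inner_le_sqrt_mul_sqrt (hT : T.IsPositive) (x y : E) :
    ‖inner 𝕜 (T x) y‖ ≤
      √(RCLike.re (inner 𝕜 (T x) x)) * √(RCLike.re (inner 𝕜 (T y) y)) :=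
  @InnerProductSpace.Core.norm_inner_le_norm 𝕜 E _ _ _ hT.preInnerProductCore x y

theorem norm_sum_inner_le {ι : Type*} (s : Finset ι) {T : ι → E →L[𝕜] E}
    (hT : ∀ i, (T i).IsPositive) (x y : ι → E) :
    ‖∑ i ∈ s, inner 𝕜 (T i (x i)) (y i)‖ ≤
      √(∑ i ∈ s, RCLike.re (inner 𝕜 (T i (x i)) (x i))) *
        √(∑ i ∈ s, RCLike.re (inner 𝕜 (T i (y i)) (y i))) :=
  calc ‖∑ i ∈ s, inner 𝕜 (T i (x i)) (y i)‖
      ≤ ∑ i ∈ s, √(RCLike.re (inner 𝕜 (T i (x i)) (x i))) *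
          √(RCLike.re (inner 𝕜 (T i (y i)) (y i))) :=
        (norm_sum_le _ _).trans <| Finset.sum_le_sum fun i _ =>
          (hT i).norm_inner_le_sqrt_mul_sqrt _ _
    _ ≤ _ := Real.sum_sqrt_mul_sqrt_le s (fun i => (hT i).re_inner_nonneg_left _)
        (fun i => (hT i).re_inner_nonneg_left _)

end ContinuousLinearMap.IsPositive

namespace OpMeasure

variable {X : Type*} [MeasurableSpace X] (ν : OpMeasure X M)

theorem inner_empty (e f : M) : inner ℂ (ν.toFun ∅ e) f = 0 := by
  have h := ν.countably_additive e f (fun _ => ∅) (fun _ => .empty)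
    fun _ _ _ => Set.disjoint_empty _
  rw [Set.iUnion_empty] at h
  exact tendsto_nhds_unique tendsto_const_nhds h.summable.tendsto_atTop_zero

open Classical in
noncomputable def toVectorMeasure (e f : M) : VectorMeasure X ℂ where
  measureOf' ω := if MeasurableSet ω then inner ℂ (ν.toFun ω e) f else 0
  empty' := by simp only [MeasurableSet.empty, if_true, ν.inner_empty]
  not_measurable' _ hω := if_neg hω
  m_iUnion' g hg hd := by
    simpa only [hg, MeasurableSet.iUnion hg, if_true] using ν.countably_additive e f g hg hd

theorem toVectorMeasure_apply {e f : M} {ω : Set X} (hω : MeasurableSet ω) :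
    ν.toVectorMeasure e f ω = inner ℂ (ν.toFun ω e) f :=
  if_pos hω

theorem sum_inner_inter {ι : Type*} [Fintype ι] {s : ι → Set X}
    (hs : ∀ i, MeasurableSet (s i)) (hd : Pairwise (Function.onFun Disjoint s))
    (hcover : ⋃ i, s i = Set.univ) {ω : Set X} (hω : MeasurableSet ω) (e f : M) :
    ∑ i, inner ℂ (ν.toFun (ω ∩ s i) e) f = inner ℂ (ν.toFun ω e) f := by
  have hsum := (ν.toVectorMeasure e f).hasSum_of_disjoint_iUnion (fun i => hω.inter (hs i))
    fun i j hij => (hd hij).mono Set.inter_subset_right Set.inter_subset_right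
  rw [← Set.inter_iUnion, hcover, Set.inter_univ] at hsum
  rw [← ν.toVectorMeasure_apply hω, hsum.unique (hasSum_fintype _)]
  exact Finset.sum_congr rfl fun i _ => (ν.toVectorMeasure_apply (hω.inter (hs i))).symm

end OpMeasure

section PairSum

variable {X : Type*} [MeasurableSpace X] (ν : OpMeasure X M)

theorem pairSumNu_eq_sum_inter (P P' : TaggedPartition X) (F G : X → M) :
    pairSumNu ν.toFun P F G = ∑ i, ∑ j,
      inner ℂ (ν.toFun (P.piece i ∩ P'.piece j) (F (P.tag i))) (G (P.tag i)) :=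
  Finset.sum_congr rfl fun i _ =>
    (ν.sum_inner_inter P'.meas P'.disj P'.cover (P.meas i) _ _).symm

theorem pairSumNu_eq_sum_inter' (P P' : TaggedPartition X) (F G : X → M) :
    pairSumNu ν.toFun P' F G = ∑ i, ∑ j,
      inner ℂ (ν.toFun (P.piece i ∩ P'.piece j) (F (P'.tag j))) (G (P'.tag j)) := by
  rw [Finset.sum_comm]
  refine Finset.sum_congr rfl fun j _ => ?_
  simp_rw [Set.inter_comm (P.piece _)]
  exact (ν.sum_inner_inter P.meas P.disj P.cover (P'.meas j) _ _).symm

theorem norm_pairSumNu_sub_le (P P' : TaggedPartition X) (F G : X → M) :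
    ‖pairSumNu ν.toFun P F G - pairSumNu ν.toFun P' F G‖ ≤
      √(crossSqNu ν.toFun P P' F) * √(normSqNu ν.toFun P G) +
        √(normSqNu ν.toFun P' F) * √(crossSqNu ν.toFun P P' G) := by
  set T : Fin P.n × Fin P'.n → M →L[ℂ] M := fun p => ν.toFun (P.piece p.1 ∩ P'.piece p.2)
  have hT : ∀ p, (T p).IsPositive := fun p => ν.pos _ ((P.meas p.1).inter (P'.meas p.2))
  have hdiff : pairSumNu ν.toFun P F G - pairSumNu ν.toFun P' F G =
      ∑ p, inner ℂ (T p (F (P.tag p.1) - F (P'.tag p.2))) (G (P.tag p.1)) +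
        ∑ p, inner ℂ (T p (F (P'.tag p.2))) (G (P.tag p.1) - G (P'.tag p.2)) := by
    rw [pairSumNu_eq_sum_inter ν P P', pairSumNu_eq_sum_inter' ν P P',
      ← Fintype.sum_prod_type', ← Fintype.sum_prod_type', ← Finset.sum_add_distrib,
      ← Finset.sum_sub_distrib]
    refine Finset.sum_congr rfl fun p _ => ?_
    simp only [T, map_sub, inner_sub_left, inner_sub_right]
    ring
  have hcross : ∀ H : X → M, crossSqNu ν.toFun P P' H =
      ∑ p, RCLike.re (inner ℂ (T p (H (P.tag p.1) - H (P'.tag p.2)))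
        (H (P.tag p.1) - H (P'.tag p.2))) := by
    intro H
    rw [crossSqNu, Fintype.sum_prod_type]
    rfl
  have hnorm : normSqNu ν.toFun P G =
      ∑ p, RCLike.re (inner ℂ (T p (G (P.tag p.1))) (G (P.tag p.1))) := by
    rw [normSqNu, pairSumNu_eq_sum_inter ν P P', Fintype.sum_prod_type]
    simp only [Complex.re_sum]
    rfl
  have hnorm' : normSqNu ν.toFun P' F =
      ∑ p, RCLike.re (inner ℂ (T p (F (P'.tag p.2))) (F (P'.tag p.2))) := by
    rw [normSqNu, pairSumNu_eq_sum_inter' ν P P', Fintype.sum_prod_type]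
    simp only [Complex.re_sum]
    rfl
  rw [hdiff, hcross, hcross, hnorm, hnorm']
  exact (norm_add_le _ _).trans <| add_le_add
    (ContinuousLinearMap.IsPositive.norm_sum_inner_le _ hT _ _)
    (ContinuousLinearMap.IsPositive.norm_sum_inner_le _ hT _ _)

end PairSum

namespace BorelPartition

variable {X : Type*} [MeasurableSpace X]

theorem exists_mem (Q : BorelPartition X) (x : X) : ∃ i, x ∈ Q.piece i :=
  Set.mem_iUnion.1 (Q.cover ▸ Set.mem_univ x)

theorem eq_of_mem_of_mem (Q : BorelPartition X) {x : X} {i j : Fin Q.n}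
    (hi : x ∈ Q.piece i) (hj : x ∈ Q.piece j) : i = j := by
  by_contra hij
  exact Set.disjoint_left.1 (Q.disj hij) hi hj

theorem sum_indicator_apply_of_mem {E : Type*} [AddCommMonoid E] (Q : BorelPartition X)
    (c : Fin Q.n → E) {x : X}
    {i : Fin Q.n} (hx : x ∈ Q.piece i) :
    ∑ j, (Q.piece j).indicator (fun _ => c j) x = c i := by
  rw [Finset.sum_eq_single i (fun j _ hji => Set.indicator_of_notMem
    (fun hxj => hji (Q.eq_of_mem_of_mem hxj hx)) _) (by simp), Set.indicator_of_mem hx]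

instance : Inhabited (BorelPartition X) where
  default :=
    { n := 1
      piece := fun _ => Set.univ
      meas := fun _ => .univ
      disj := fun i j hij => absurd (Subsingleton.elim i j) hij
      cover := Set.iUnion_const _ }

def inf (A B : BorelPartition X) : BorelPartition X where
  n := A.n * B.n
  piece k := A.piece (finProdFinEquiv.symm k).1 ∩ B.piece (finProdFinEquiv.symm k).2
  meas k := (A.meas _).inter (B.meas _)
  disj k l hkl := by
    obtain h | h : (finProdFinEquiv.symm k).1 ≠ (finProdFinEquiv.symm l).1 ∨
        (finProdFinEquiv.symm k).2 ≠ (finProdFinEquiv.symm l).2 := by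
      rw [← not_and_or, ← Prod.ext_iff]
      exact fun h => hkl (finProdFinEquiv.symm.injective h)
    · exact (A.disj h).mono Set.inter_subset_left Set.inter_subset_left
    · exact (B.disj h).mono Set.inter_subset_right Set.inter_subset_right
  cover := by
    refine Set.eq_univ_of_forall fun x => ?_
    obtain ⟨i, hi⟩ := A.exists_mem x
    obtain ⟨j, hj⟩ := B.exists_mem x
    exact Set.mem_iUnion.2 ⟨finProdFinEquiv (i, j), by simpa using ⟨hi, hj⟩⟩

open Classical in
theorem exists_taggedPartition_refines (Q : BorelPartition X) :
    ∃ P : TaggedPartition X, P.Refines Q := by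
  -- keep only the nonempty pieces of `Q`, which can then be tagged
  let e := (Fintype.equivFin {i // (Q.piece i).Nonempty}).symm
  refine ⟨{ n := _
            piece := fun k => Q.piece (e k)
            meas := fun k => Q.meas _
            disj := fun k l hkl => Q.disj fun h => hkl (e.injective (Subtype.ext h))
            cover := Set.eq_univ_of_forall fun x => ?_
            tag := fun k => (e k).2.some
            tag_mem := fun k => (e k).2.some_mem }, fun k => ⟨e k, subset_rfl⟩⟩
  obtain ⟨i, hi⟩ := Q.exists_mem x
  exact Set.mem_iUnion.2 ⟨e.symm ⟨i, x, hi⟩, by simpa using hi⟩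

end BorelPartition

namespace TaggedPartition

variable {X : Type*} [MeasurableSpace X]

theorem refines_inf_iff {P : TaggedPartition X} {A B : BorelPartition X} :
    P.Refines (A.inf B) ↔ P.Refines A ∧ P.Refines B := by
  refine ⟨fun h => ⟨fun i => ?_, fun i => ?_⟩, fun ⟨hA, hB⟩ i => ?_⟩
  · obtain ⟨k, hk⟩ := h i
    exact ⟨_, hk.trans Set.inter_subset_left⟩
  · obtain ⟨k, hk⟩ := h i
    exact ⟨_, hk.trans Set.inter_subset_right⟩
  · obtain ⟨a, ha⟩ := hA i
    obtain ⟨b, hb⟩ := hB i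
    exact ⟨finProdFinEquiv (a, b), by simpa [BorelPartition.inf] using ⟨ha, hb⟩⟩

variable (X) in
def refinementFilter : Filter (TaggedPartition X) :=
  ⨅ Q : BorelPartition X, 𝓟 {P | P.Refines Q}

theorem hasBasis_refinementFilter :
    (refinementFilter X).HasBasis (fun _ => True)
      fun Q => {P : TaggedPartition X | P.Refines Q} :=
  hasBasis_iInf_principal fun A B =>
    ⟨A.inf B, fun _ hP => (refines_inf_iff.1 hP).1, fun _ hP => (refines_inf_iff.1 hP).2⟩

instance : (refinementFilter X).NeBot :=
  hasBasis_refinementFilter.neBot_iff.2 fun {Q} _ => Q.exists_taggedPartition_refines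

theorem exists_tendsto_refinementFilter {E : Type*} [PseudoMetricSpace E] [CompleteSpace E]
    (z : TaggedPartition X → E)
    (hz : ∀ ε > 0, ∃ Q : BorelPartition X, ∀ P P' : TaggedPartition X,
      P.Refines Q → P'.Refines Q → dist (z P) (z P') < ε) :
    ∃ L, Tendsto z (refinementFilter X) (𝓝 L) := by
  refine cauchy_map_iff_exists_tendsto.1 (cauchy_map_iff'.2 ?_)
  refine (hasBasis_refinementFilter.prod_self.tendsto_iff Metric.uniformity_basis_dist).2
    fun ε hε => ?_
  obtain ⟨Q, hQ⟩ := hz ε hε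
  exact ⟨Q, trivial, fun p hp => hQ p.1 p.2 hp.1 hp.2⟩

end TaggedPartition

section Admissible

variable {X : Type*} [MeasurableSpace X] (ν : OpMeasure X M)

theorem crossSqNu_eq_zero {P P' : TaggedPartition X} {F : X → M}
    (hF : ∀ i j, (P.piece i ∩ P'.piece j).Nonempty → F (P.tag i) = F (P'.tag j)) :
    crossSqNu ν.toFun P P' F = 0 := by
  refine Finset.sum_eq_zero fun i _ => Finset.sum_eq_zero fun j _ => ?_
  rcases (P.piece i ∩ P'.piece j).eq_empty_or_nonempty with hij | hij
  · rw [hij, ν.inner_empty, Complex.zero_re]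
  · rw [hF i j hij, sub_self, map_zero, inner_zero_left, Complex.zero_re]

theorem normSqNu_le_of_forall_mem_range (P : TaggedPartition X) {ι : Type*} [Fintype ι]
    {c : ι → M} {F : X → M} (hF : ∀ x, F x ∈ Set.range c) :
    normSqNu ν.toFun P F ≤ ∑ j, (inner ℂ (ν.toFun Set.univ (c j)) (c j)).re := by
  choose idx hidx using hF
  calc normSqNu ν.toFun P F
      = ∑ i, (inner ℂ (ν.toFun (P.piece i) (c (idx (P.tag i)))) (c (idx (P.tag i)))).re := by
        simp only [normSqNu, pairSumNu, Complex.re_sum, hidx]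
    _ ≤ ∑ i, ∑ j, (inner ℂ (ν.toFun (P.piece i) (c j)) (c j)).re :=
        Finset.sum_le_sum fun i _ => Finset.single_le_sum
          (fun j _ => (ν.pos _ (P.meas i)).re_inner_nonneg_left (c j)) (Finset.mem_univ _)
    _ = ∑ j, (inner ℂ (ν.toFun Set.univ (c j)) (c j)).re := by
        rw [Finset.sum_comm]
        refine Finset.sum_congr rfl fun j _ => ?_
        rw [← Complex.re_sum, ← ν.sum_inner_inter P.meas P.disj P.cover .univ]
        simp only [Set.univ_inter]

theorem nuAdmissible_sum_indicator (Q : BorelPartition X) (c : Fin Q.n → M) :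
    NuAdmissible ν.toFun fun x => ∑ j, (Q.piece j).indicator (fun _ => c j) x := by
  refine ⟨⟨√(∑ j, (inner ℂ (ν.toFun Set.univ (c j)) (c j)).re), fun P =>
      Real.sqrt_le_sqrt (normSqNu_le_of_forall_mem_range ν P fun x => ?_)⟩,
    fun ε hε => ⟨Q, fun P P' hP hP' => ?_⟩⟩
  · obtain ⟨i, hi⟩ := Q.exists_mem x
    exact ⟨i, (Q.sum_indicator_apply_of_mem c hi).symm⟩
  · rw [crossSqNu_eq_zero ν ?_, Real.sqrt_zero]
    · exact hε
    rintro i j ⟨x, hxi, hxj⟩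
    obtain ⟨a, ha⟩ := hP i
    obtain ⟨b, hb⟩ := hP' j
    rw [Q.sum_indicator_apply_of_mem c (ha (P.tag_mem i)),
      Q.sum_indicator_apply_of_mem c (hb (P'.tag_mem j)), Q.eq_of_mem_of_mem (ha hxi) (hb hxj)]

theorem NuAdmissible.dist_pairSumNu_lt {ν : OpMeasure X M} {F G : X → M}
    (hF : NuAdmissible ν.toFun F) (hG : NuAdmissible ν.toFun G) (ε : ℝ) (hε : 0 < ε) :
    ∃ Q : BorelPartition X, ∀ P P' : TaggedPartition X, P.Refines Q → P'.Refines Q →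
      dist (pairSumNu ν.toFun P F G) (pairSumNu ν.toFun P' F G) < ε := by
  obtain ⟨⟨CF, hCF⟩, hF⟩ := hF
  obtain ⟨⟨CG, hCG⟩, hG⟩ := hG
  set δ := ε / (|CF| + |CG| + 1)
  have hδ : δ * (|CF| + |CG| + 1) = ε := div_mul_cancel₀ _ (by positivity)
  obtain ⟨QF, hQF⟩ := hF δ (by positivity)
  obtain ⟨QG, hQG⟩ := hG δ (by positivity)
  refine ⟨QF.inf QG, fun P P' hP hP' => ?_⟩
  rw [TaggedPartition.refines_inf_iff] at hP hP'
  calc dist (pairSumNu ν.toFun P F G) (pairSumNu ν.toFun P' F G)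
      ≤ √(crossSqNu ν.toFun P P' F) * √(normSqNu ν.toFun P G) +
          √(normSqNu ν.toFun P' F) * √(crossSqNu ν.toFun P P' G) :=
        (dist_eq_norm _ _).trans_le (norm_pairSumNu_sub_le ν P P' F G)
    _ ≤ δ * |CG| + |CF| * δ := by
        gcongr
        · exact (hQF P P' hP.1 hP'.1).le
        · exact (hCG P).trans (le_abs_self CG)
        · exact (hCF P').trans (le_abs_self CF)
        · exact (hQG P P' hP.2 hP'.2).le
    _ < ε := by linarith [show 0 < δ by positivity]

end Admissible

/-- If `F` and `G` are ν-admissible, the net `(P,S) ↦ ⟨F(P,S), G(P,S)⟩_ν`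
converges (in the refinement-directed sense); moreover every measurable simple
function is ν-admissible. -/
theorem stmt13 (ν : OpMeasure Torus M) (F G : Torus → M)
    (hF : NuAdmissible ν.toFun F) (hG : NuAdmissible ν.toFun G) :
    (∃ L : ℂ, ∀ ε : ℝ, 0 < ε → ∃ Q : BorelPartition Torus,
      ∀ P : TaggedPartition Torus, P.Refines Q →
        ‖pairSumNu ν.toFun P F G - L‖ < ε) ∧
    (∀ (Q : BorelPartition Torus) (c : Fin Q.n → M),
      NuAdmissible ν.toFun (fun s => ∑ j : Fin Q.n, (Q.piece j).indicator (fun _ => c j) s)) := by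
  refine ⟨?_, nuAdmissible_sum_indicator ν⟩
  obtain ⟨L, hL⟩ := TaggedPartition.exists_tendsto_refinementFilter _ (hF.dist_pairSumNu_lt hG)
  refine ⟨L, fun ε hε => ?_⟩
  obtain ⟨Q, -, hQ⟩ :=
    (TaggedPartition.hasBasis_refinementFilter.tendsto_iff Metric.nhds_basis_ball).1 hL ε hε
  exact ⟨Q, fun P hP => by simpa only [Metric.mem_ball, dist_eq_norm] using hQ P hP⟩
end

section
/- Let a, a′ : 𝕋 → ℂ be continuous, let ω, ω′ ⊆ 𝕋 be Borel sets, and let m ∈ M. Let μ_m be the finite positive Borel measure on 𝕋 defined by μ_m(E) := ⟨ν(E)m, m⟩ (a measure by the assumptions on ν). Define F := 1_ω·m and F′ := 1_{ω′}·m. Then the net (P,S) ↦ ⟨(a′F′)(P,S), (aF)(P,S)⟩_ν = ∑_j a′(s_j)·conj(a(s_j))·1_{ω′}(s_j)·1_ω(s_j)·⟨ν(ω_j)m, m⟩ converges, in the refinement-directed sense, to the integral ∫_{ω∩ω′} a′(s)·conj(a(s)) dμ_m(s). -/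
open ContinuousLinearMap

variable {M : Type*} [NormedAddCommGroup M] [InnerProductSpace ℂ M] [CompleteSpace M]

open MeasureTheory

/- The summand equals `μ_m(ω_j) • g(s_j)` with `g := 1_{ω ∩ ω′} · a′ conj(a)`, so the net is a
Riemann sum of `g` against `μ_m`. Refine until every piece lies inside or outside `ω ∩ ω′` and
has diameter below the modulus of uniform continuity of `a′ conj(a)` at scale `η` (the circle is
compact): then `g` oscillates by at most `η` on each piece, and the Riemann sum is within
`η μ_m(𝕋)` of `∫ g dμ_m`. -/

open Set

namespace BorelPartition

variable {X : Type*} [MeasurableSpace X]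

lemma exists_subset_of_iUnion_eq_univ {ι : Type*} [Fintype ι] {c : ι → Set X}
    (hc : ∀ i, MeasurableSet (c i)) (hcover : ⋃ i, c i = univ) :
    ∃ Q : BorelPartition X, ∀ j, ∃ i, Q.piece j ⊆ c i := by
  let e := (Fintype.equivFin ι).symm
  refine ⟨⟨Fintype.card ι, disjointed (c ∘ e),
    fun j => disjointedRec (fun _ _ ht => ht.diff (hc _)) (hc _), disjoint_disjointed _, ?_⟩,
    fun j => ⟨e j, disjointed_subset _ j⟩⟩
  rw [iUnion_disjointed, ← hcover]
  exact e.surjective.iUnion_comp c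

lemma exists_dist_lt_and_subset_or_subset_compl [PseudoMetricSpace X] [CompactSpace X]
    [OpensMeasurableSpace X] {E : Set X} (hE : MeasurableSet E) {δ : ℝ} (hδ : 0 < δ) :
    ∃ Q : BorelPartition X, ∀ j, (∀ x ∈ Q.piece j, ∀ y ∈ Q.piece j, dist x y < δ) ∧
      (Q.piece j ⊆ E ∨ Q.piece j ⊆ Eᶜ) := by
  classical
  obtain ⟨t, -, htfin, hcover⟩ :=
    finite_cover_balls_of_compact (isCompact_univ (X := X)) (half_pos hδ)
  have := htfin.fintype
  let c : t × Bool → Set X := fun p => Metric.ball (p.1 : X) (δ / 2) ∩ if p.2 then E else Eᶜ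
  obtain ⟨Q, hQ⟩ := exists_subset_of_iUnion_eq_univ (c := c)
    (fun p => measurableSet_ball.inter (by cases p.2 <;> simp [hE, hE.compl])) <| by
      refine eq_univ_of_forall fun y => ?_
      obtain ⟨x, hx, hyx⟩ := mem_iUnion₂.1 (hcover (mem_univ y))
      refine mem_iUnion.2 ⟨(⟨x, hx⟩, decide (y ∈ E)), hyx, ?_⟩
      by_cases hy : y ∈ E <;> simp [hy]
  refine ⟨Q, fun j => ?_⟩
  obtain ⟨⟨x, b⟩, hj⟩ := hQ j
  refine ⟨fun y hy z hz => ?_, ?_⟩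
  · calc dist y z ≤ dist y x + dist z x := dist_triangle_right y z x
      _ < δ / 2 + δ / 2 := add_lt_add (hj hy).1 (hj hz).1
      _ = δ := add_halves δ
  · cases b
    · exact Or.inr (hj.trans inter_subset_right)
    · exact Or.inl (hj.trans inter_subset_right)

end BorelPartition

lemma norm_indicator_sub_indicator_le {X F : Type*} [SeminormedAddCommGroup F] {E S : Set X}
    {h : X → F} {η : ℝ} (hη : 0 ≤ η) (hS : S ⊆ E ∨ S ⊆ Eᶜ)
    (hh : ∀ x ∈ S, ∀ y ∈ S, ‖h x - h y‖ ≤ η)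
    {x y : X} (hx : x ∈ S) (hy : y ∈ S) :
    ‖E.indicator h x - E.indicator h y‖ ≤ η := by
  rcases hS with hS | hS
  · rw [indicator_of_mem (hS hx), indicator_of_mem (hS hy)]
    exact hh x hx y hy
  · rw [indicator_of_notMem (hS hx), indicator_of_notMem (hS hy), sub_zero, norm_zero]
    exact hη

lemma TaggedPartition.norm_sum_smul_sub_integral_le {X F : Type*} [MeasurableSpace X]
    [NormedAddCommGroup F] [NormedSpace ℝ F] [CompleteSpace F] (P : TaggedPartition X)
    {μ : Measure X} [IsFiniteMeasure μ] {g : X → F} (hg : Integrable g μ) {η : ℝ}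
    (hη : ∀ i, ∀ x ∈ P.piece i, ‖g (P.tag i) - g x‖ ≤ η) :
    ‖∑ i, μ.real (P.piece i) • g (P.tag i) - ∫ x, g x ∂μ‖ ≤ η * μ.real univ := by
  have hint : ∫ x, g x ∂μ = ∑ i, ∫ x in P.piece i, g x ∂μ := by
    rw [← setIntegral_univ, ← P.cover,
      integral_iUnion_fintype P.meas P.disj fun _ => hg.integrableOn]
  calc ‖∑ i, μ.real (P.piece i) • g (P.tag i) - ∫ x, g x ∂μ‖
      = ‖∑ i, ∫ x in P.piece i, (g (P.tag i) - g x) ∂μ‖ := by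
        rw [hint, ← Finset.sum_sub_distrib]
        congr! 2 with i
        rw [integral_sub (integrable_const _) hg.integrableOn, setIntegral_const]
    _ ≤ ∑ i, η * μ.real (P.piece i) := norm_sum_le_of_le _ fun i _ =>
        norm_setIntegral_le_of_norm_le_const (measure_lt_top _ _) (hη i)
    _ = η * μ.real univ := by
        rw [← Finset.mul_sum, ← measureReal_iUnion_fintype P.disj P.meas, P.cover]

/-- With `F = 1_ω ⬝ m`, `F′ = 1_{ω′} ⬝ m` and `μ_m(E) = ⟨ν(E)m, m⟩`, the net
`(P,S) ↦ ⟨(a′F′)(P,S), (aF)(P,S)⟩_ν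
  = ∑_j a′(s_j) conj(a(s_j)) 1_{ω′}(s_j) 1_ω(s_j) ⟨ν(ω_j)m, m⟩`
converges, in the refinement-directed sense, to
`∫_{ω ∩ ω′} a′(s) conj(a(s)) dμ_m(s)`. -/
theorem stmt17 (ν : OpMeasure Torus M)
    (a a' : Torus → ℂ) (ha : Continuous a) (ha' : Continuous a')
    (ω ω' : Set Torus) (hω : MeasurableSet ω) (hω' : MeasurableSet ω')
    (m : M) (μm : Measure Torus) [IsFiniteMeasure μm]
    (hμm : ∀ E : Set Torus, MeasurableSet E →
      (((μm E).toReal : ℝ) : ℂ) = (inner ℂ (ν.toFun E m) m : ℂ)) :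
    ∀ ε : ℝ, 0 < ε → ∃ Q : BorelPartition Torus,
      ∀ P : TaggedPartition Torus, P.Refines Q →
        ‖((∑ i : Fin P.n,
              a' (P.tag i) * (starRingEnd ℂ) (a (P.tag i)) *
                ω'.indicator (fun _ => (1 : ℂ)) (P.tag i) *
                ω.indicator (fun _ => (1 : ℂ)) (P.tag i) *
                (inner ℂ (ν.toFun (P.piece i) m) m : ℂ)) -
            ∫ s in ω ∩ ω', a' s * (starRingEnd ℂ) (a s) ∂μm)‖ < ε := by
  intro ε hε
  set E := ω ∩ ω'
  set h : Torus → ℂ := fun s => a' s * (starRingEnd ℂ) (a s)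
  have hh : UniformContinuous h :=
    CompactSpace.uniformContinuous_of_continuous (ha'.mul (Complex.continuous_conj.comp ha))
  set η := ε / (μm.real univ + 1)
  have hη : 0 < η := by positivity
  obtain ⟨δ, hδ, hhδ⟩ := Metric.uniformContinuous_iff.1 hh η hη
  obtain ⟨Q, hQ⟩ :=
    BorelPartition.exists_dist_lt_and_subset_or_subset_compl (hω.inter hω') hδ
  refine ⟨Q, fun P hP => ?_⟩
  have hsummand : ∀ i, a' (P.tag i) * (starRingEnd ℂ) (a (P.tag i)) *
      ω'.indicator (fun _ => (1 : ℂ)) (P.tag i) * ω.indicator (fun _ => (1 : ℂ)) (P.tag i) *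
      (inner ℂ (ν.toFun (P.piece i) m) m : ℂ) =
        μm.real (P.piece i) • E.indicator h (P.tag i) := by
    intro i
    rw [← hμm _ (P.meas i), Complex.real_smul, measureReal_def]
    by_cases h1 : P.tag i ∈ ω <;> by_cases h2 : P.tag i ∈ ω' <;> simp [E, h, h1, h2, mul_comm]
  have hosc : ∀ i, ∀ x ∈ P.piece i,
      ‖E.indicator h (P.tag i) - E.indicator h x‖ ≤ η := by
    intro i x hx
    obtain ⟨j, hij⟩ := hP i
    obtain ⟨hdist, hEj⟩ := hQ j
    exact norm_indicator_sub_indicator_le hη.le hEj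
      (fun y hy z hz => dist_eq_norm (h y) (h z) ▸ (hhδ (hdist y hy z hz)).le)
      (hij (P.tag_mem i)) (hij hx)
  have hg : Integrable (E.indicator h) μm :=
    (hh.continuous.integrable_of_hasCompactSupport
      (HasCompactSupport.of_compactSpace h)).indicator (hω.inter hω')
  rw [Finset.sum_congr rfl fun i _ => hsummand i, ← integral_indicator (hω.inter hω')]
  calc _ ≤ η * μm.real univ := P.norm_sum_smul_sub_integral_le hg hosc
    _ < ε := by
      rw [div_mul_eq_mul_div, div_lt_iff₀ (by positivity)]
      nlinarith [measureReal_nonneg (μ := μm) (s := univ)]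
end

section
/- For every q ∈ (0,1) there exists a function φ holomorphic on the annulus {z ∈ ℂ : q^{3/2} < |z| < q^{−1/2}} such that |φ(z)| = 1 for every z with |z| = 1, |φ(z)| = √q for every z with |z| = q, φ(√q) = 0, and φ(z) ≠ 0 for every z with q ≤ |z| ≤ 1 and z ≠ √q. -/
/-!
Put `c = √q` and `p = c⁴ = q²`. The theta function `θ(x) = (x; p)_∞ (p/x; p)_∞` is holomorphic
on `ℂ ∖ {0}`, satisfies `θ(p/x) = θ(x)` and `θ(x⁻¹) = -x⁻¹ θ(x)`, and on `|p| < |x| < |p|⁻¹`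
vanishes only at `x = 1`. Hence `φ(z) = c θ(z/c) / θ(cz)` is holomorphic on `c³ < |z| < c⁻¹`
with `√q` as its only zero in `q ≤ |z| ≤ 1`, and the functional equations give
`φ(z⁻¹) = φ(z)⁻¹` and `φ(q²/z) = q φ(z)⁻¹`. As `φ` commutes with complex conjugation, which is
`z ↦ z⁻¹` on `|z| = 1` and `z ↦ q²/z` on `|z| = q`, `|φ|²` equals `1` and `q` on these circles.
-/

open Complex ComplexConjugate

noncomputable def qPochhammer (p x : ℂ) : ℂ := ∏' n : ℕ, (1 - p ^ n * x)

noncomputable def qTheta (p x : ℂ) : ℂ := qPochhammer p x * qPochhammer p (p / x)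

section qPochhammer

variable {p x : ℂ}

lemma summable_norm_pow_mul (hp : ‖p‖ < 1) (x : ℂ) : Summable fun n : ℕ ↦ ‖p ^ n * x‖ := by
  simpa [norm_mul, norm_pow] using
    (summable_geometric_of_lt_one (norm_nonneg p) hp).mul_right ‖x‖

lemma multipliable_qPochhammer (hp : ‖p‖ < 1) (x : ℂ) :
    Multipliable fun n : ℕ ↦ 1 - p ^ n * x := by
  simpa [sub_eq_add_neg] using
    multipliable_one_add_of_summable (f := fun n : ℕ ↦ -(p ^ n * x))
      (by simpa using summable_norm_pow_mul hp x)

lemma qPochhammer_ne_zero (hp : ‖p‖ < 1) (hx : ‖x‖ < 1) : qPochhammer p x ≠ 0 := by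
  have hfactor (n : ℕ) : 1 + -(p ^ n * x) ≠ 0 := by
    rw [← sub_eq_add_neg, sub_ne_zero]
    intro h
    have hle : ‖p ^ n * x‖ ≤ ‖x‖ := by
      rw [norm_mul, norm_pow]
      exact mul_le_of_le_one_left (norm_nonneg x) (pow_le_one₀ (norm_nonneg p) hp.le)
    rw [← h, norm_one] at hle
    exact hle.not_gt hx
  simpa [qPochhammer, sub_eq_add_neg] using
    tprod_one_add_ne_zero_of_summable hfactor (by simpa using summable_norm_pow_mul hp x)

lemma qPochhammer_eq_one_sub_mul (hp : ‖p‖ < 1) (x : ℂ) :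
    qPochhammer p x = (1 - x) * qPochhammer p (p * x) := by
  have hshift : (fun n : ℕ ↦ 1 - p ^ (n + 1) * x) = fun n ↦ 1 - p ^ n * (p * x) := by
    ext n; ring
  rw [qPochhammer, tprod_eq_zero_mul' (hshift ▸ multipliable_qPochhammer hp (p * x)), hshift,
    pow_zero, one_mul, qPochhammer]

lemma qPochhammer_one (hp : ‖p‖ < 1) : qPochhammer p 1 = 0 := by
  rw [qPochhammer_eq_one_sub_mul hp, sub_self, zero_mul]

lemma conj_qPochhammer (hp : ‖p‖ < 1) (x : ℂ) :
    conj (qPochhammer p x) = qPochhammer (conj p) (conj x) := by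
  rw [qPochhammer, (multipliable_qPochhammer hp x).map_tprod _ continuous_conj]
  simp [qPochhammer]

lemma differentiableOn_qPochhammer_ball (hp : ‖p‖ < 1) (R : ℝ) :
    DifferentiableOn ℂ (qPochhammer p) (Metric.ball 0 R) := by
  have hconv := Summable.hasProdLocallyUniformlyOn_nat_one_add (f := fun n x ↦ -(p ^ n * x))
    (Metric.isOpen_ball (x := 0) (ε := R))
    ((summable_geometric_of_lt_one (norm_nonneg p) hp).mul_right R)
    (.of_forall fun n x hx ↦ ?_) fun n ↦ by fun_prop
  · have hfun : qPochhammer p = fun x ↦ ∏' n : ℕ, (1 + -(p ^ n * x)) := by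
      ext x; simp only [qPochhammer, sub_eq_add_neg]
    rw [hfun]
    refine hconv.differentiableOn (.of_forall fun _ ↦ ?_) Metric.isOpen_ball
    simpa [Finset.prod_fn] using DifferentiableOn.finsetProd fun _ _ ↦ by fun_prop
  · rw [norm_neg, norm_mul, norm_pow]
    exact mul_le_mul_of_nonneg_left (by simpa using (Metric.mem_ball.1 hx).le) (by positivity)

lemma differentiable_qPochhammer (hp : ‖p‖ < 1) : Differentiable ℂ (qPochhammer p) := fun x ↦
  (differentiableOn_qPochhammer_ball hp (‖x‖ + 1)).differentiableAt
    (Metric.isOpen_ball.mem_nhds (by simp))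

end qPochhammer

section qTheta

variable {p x : ℂ}

lemma qTheta_self_div (hp : p ≠ 0) (x : ℂ) : qTheta p (p / x) = qTheta p x := by
  rw [qTheta, qTheta, div_div_cancel₀ hp, mul_comm]

lemma qTheta_eq_one_sub_mul (hp : ‖p‖ < 1) (x : ℂ) :
    qTheta p x = (1 - x) * qPochhammer p (p * x) * qPochhammer p (p / x) := by
  rw [qTheta, qPochhammer_eq_one_sub_mul hp x]

lemma qTheta_one (hp : ‖p‖ < 1) : qTheta p 1 = 0 := by
  rw [qTheta, qPochhammer_one hp, zero_mul]

lemma qTheta_inv (hp : ‖p‖ < 1) (hx : x ≠ 0) : qTheta p x⁻¹ = -x⁻¹ * qTheta p x := by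
  rw [qTheta_eq_one_sub_mul hp, qTheta_eq_one_sub_mul hp, div_inv_eq_mul, ← div_eq_mul_inv]
  field_simp
  ring

lemma qTheta_ne_zero (hp : ‖p‖ < 1) (hpx : ‖p‖ < ‖x‖) (hpx' : ‖p * x‖ < 1) (hx : x ≠ 1) :
    qTheta p x ≠ 0 := by
  have hx0 : 0 < ‖x‖ := (norm_nonneg p).trans_lt hpx
  rw [qTheta_eq_one_sub_mul hp]
  refine mul_ne_zero (mul_ne_zero (sub_ne_zero.2 hx.symm) (qPochhammer_ne_zero hp hpx')) ?_
  refine qPochhammer_ne_zero hp ?_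
  rwa [norm_div, div_lt_one hx0]

lemma conj_qTheta (hp : ‖p‖ < 1) (x : ℂ) : conj (qTheta p x) = qTheta (conj p) (conj x) := by
  rw [qTheta, qTheta, map_mul, conj_qPochhammer hp, conj_qPochhammer hp, map_div₀]

lemma differentiableAt_qTheta (hp : ‖p‖ < 1) (hx : x ≠ 0) : DifferentiableAt ℂ (qTheta p) x :=
  (differentiable_qPochhammer hp x).mul ((differentiable_qPochhammer hp _).comp x
    ((differentiableAt_const p).div differentiableAt_id hx))

end qTheta

lemma Complex.sq_norm_eq_of_conj_eq_mul_inv {w : ℂ} {r : ℝ} (hw : w ≠ 0)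
    (h : conj w = r * w⁻¹) : ‖w‖ ^ 2 = r := by
  have hmul := Complex.mul_conj' w
  rw [h, mul_left_comm, mul_inv_cancel₀ hw, mul_one] at hmul
  exact_mod_cast hmul.symm

noncomputable def annulusBlaschke (c : ℝ) (z : ℂ) : ℂ :=
  c * qTheta (c ^ 4) (z / c) / qTheta (c ^ 4) (c * z)

section annulusBlaschke

variable {c : ℝ} {z : ℂ}

lemma norm_ofReal_pow_four_lt_one (hc0 : 0 < c) (hc1 : c < 1) : ‖(c : ℂ) ^ 4‖ < 1 := by
  rw [norm_pow, Complex.norm_of_nonneg hc0.le]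
  exact pow_lt_one₀ hc0.le hc1 (by norm_num)

lemma conj_annulusBlaschke (hc0 : 0 < c) (hc1 : c < 1) (z : ℂ) :
    conj (annulusBlaschke c z) = annulusBlaschke c (conj z) := by
  have hp := norm_ofReal_pow_four_lt_one hc0 hc1
  simp only [annulusBlaschke, map_div₀, map_mul, conj_qTheta hp, map_pow, conj_ofReal]

lemma annulusBlaschke_inv (hc0 : 0 < c) (hc1 : c < 1) (hz : z ≠ 0) :
    annulusBlaschke c z⁻¹ = (annulusBlaschke c z)⁻¹ := by
  have hp := norm_ofReal_pow_four_lt_one hc0 hc1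
  have hc : (c : ℂ) ≠ 0 := ofReal_ne_zero.2 hc0.ne'
  rw [annulusBlaschke, annulusBlaschke, inv_div, show z⁻¹ / c = (c * z)⁻¹ by field_simp,
    show c * z⁻¹ = (z / c)⁻¹ by field_simp, qTheta_inv hp (by simp [hc, hz]),
    qTheta_inv hp (by simp [hc, hz])]
  field_simp

lemma annulusBlaschke_pow_four_div (hc0 : 0 < c) (z : ℂ) :
    annulusBlaschke c ((c : ℂ) ^ 4 / z) = (c : ℂ) ^ 2 * (annulusBlaschke c z)⁻¹ := by
  have hc : (c : ℂ) ≠ 0 := ofReal_ne_zero.2 hc0.ne'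
  have hc4 : (c : ℂ) ^ 4 ≠ 0 := pow_ne_zero 4 hc
  rw [annulusBlaschke, annulusBlaschke, inv_div,
    show (c : ℂ) ^ 4 / z / c = c ^ 4 / (c * z) by field_simp,
    show (c : ℂ) * (c ^ 4 / z) = c ^ 4 / (z / c) by field_simp,
    qTheta_self_div hc4, qTheta_self_div hc4]
  field_simp

lemma annulusBlaschke_self (hc0 : 0 < c) (hc1 : c < 1) : annulusBlaschke c c = 0 := by
  rw [annulusBlaschke, div_self (ofReal_ne_zero.2 hc0.ne'),
    qTheta_one (norm_ofReal_pow_four_lt_one hc0 hc1), mul_zero, zero_div]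

lemma qTheta_ofReal_mul_ne_zero (hc0 : 0 < c) (hc1 : c < 1) (h1 : c ^ 3 < ‖z‖)
    (h2 : ‖z‖ < c⁻¹) : qTheta (c ^ 4) (c * z) ≠ 0 := by
  have hcz : c * ‖z‖ < 1 := (mul_lt_mul_of_pos_left h2 hc0).trans_eq (mul_inv_cancel₀ hc0.ne')
  refine qTheta_ne_zero (norm_ofReal_pow_four_lt_one hc0 hc1) ?_ ?_ ?_
  · simp only [norm_mul, norm_pow, Complex.norm_of_nonneg hc0.le]
    rw [pow_succ']
    exact mul_lt_mul_of_pos_left h1 hc0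
  · simp only [norm_mul, norm_pow, Complex.norm_of_nonneg hc0.le]
    nlinarith [pow_pos hc0 4]
  · intro h
    have hnorm := congrArg norm h
    rw [norm_mul, Complex.norm_of_nonneg hc0.le, norm_one] at hnorm
    exact hcz.ne hnorm

lemma qTheta_div_ofReal_ne_zero (hc0 : 0 < c) (hc1 : c < 1) (h1 : c ^ 3 < ‖z‖)
    (h2 : ‖z‖ < c⁻¹) (hz : z ≠ c) : qTheta (c ^ 4) (z / c) ≠ 0 := by
  have hcz : c * ‖z‖ < 1 := (mul_lt_mul_of_pos_left h2 hc0).trans_eq (mul_inv_cancel₀ hc0.ne')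
  refine qTheta_ne_zero (norm_ofReal_pow_four_lt_one hc0 hc1) ?_ ?_ ?_
  · simp only [norm_div, norm_pow, Complex.norm_of_nonneg hc0.le]
    rw [lt_div_iff₀ hc0]
    calc c ^ 4 * c = c ^ 3 * c ^ 2 := by ring
      _ < c ^ 3 * 1 := mul_lt_mul_of_pos_left (by nlinarith) (pow_pos hc0 3)
      _ < ‖z‖ := by linarith
  · simp only [norm_mul, norm_div, norm_pow, Complex.norm_of_nonneg hc0.le]
    rw [mul_div_assoc', div_lt_one hc0]
    calc c ^ 4 * ‖z‖ = c ^ 3 * (c * ‖z‖) := by ring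
      _ < c ^ 3 * 1 := mul_lt_mul_of_pos_left hcz (pow_pos hc0 3)
      _ ≤ c := by rw [mul_one]; exact pow_le_of_le_one hc0.le hc1.le (by norm_num)
  · rwa [Ne, div_eq_one_iff_eq (ofReal_ne_zero.2 hc0.ne')]

lemma annulusBlaschke_ne_zero (hc0 : 0 < c) (hc1 : c < 1) (h1 : c ^ 3 < ‖z‖)
    (h2 : ‖z‖ < c⁻¹) (hz : z ≠ c) : annulusBlaschke c z ≠ 0 :=
  div_ne_zero (mul_ne_zero (ofReal_ne_zero.2 hc0.ne')
    (qTheta_div_ofReal_ne_zero hc0 hc1 h1 h2 hz)) (qTheta_ofReal_mul_ne_zero hc0 hc1 h1 h2)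

lemma differentiableOn_annulusBlaschke (hc0 : 0 < c) (hc1 : c < 1) :
    DifferentiableOn ℂ (annulusBlaschke c) {z : ℂ | c ^ 3 < ‖z‖ ∧ ‖z‖ < c⁻¹} := by
  rintro z ⟨h1, h2⟩
  have hp := norm_ofReal_pow_four_lt_one hc0 hc1
  have hc : (c : ℂ) ≠ 0 := ofReal_ne_zero.2 hc0.ne'
  have hz : z ≠ 0 := norm_pos_iff.1 ((pow_pos hc0 3).trans h1)
  have hnum : DifferentiableAt ℂ (fun y ↦ qTheta (c ^ 4) (y / c)) z :=
    (differentiableAt_qTheta hp (div_ne_zero hz hc)).comp (f := fun y : ℂ ↦ y / c) z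
      (by fun_prop)
  have hden : DifferentiableAt ℂ (fun y ↦ qTheta (c ^ 4) (c * y)) z :=
    (differentiableAt_qTheta hp (mul_ne_zero hc hz)).comp (f := fun y : ℂ ↦ c * y) z
      (by fun_prop)
  exact ((hnum.const_mul _).div hden
    (qTheta_ofReal_mul_ne_zero hc0 hc1 h1 h2)).differentiableWithinAt

lemma norm_annulusBlaschke_of_norm_eq_one (hc0 : 0 < c) (hc1 : c < 1) (hz : ‖z‖ = 1) :
    ‖annulusBlaschke c z‖ = 1 := by
  have hz0 : z ≠ 0 := norm_ne_zero_iff.1 (by rw [hz]; exact one_ne_zero)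
  have hne : annulusBlaschke c z ≠ 0 := annulusBlaschke_ne_zero hc0 hc1
    (by rw [hz]; exact pow_lt_one₀ hc0.le hc1 (by norm_num))
    (by rw [hz]; exact one_lt_inv₀ hc0 |>.2 hc1)
    (by rintro rfl; rw [Complex.norm_of_nonneg hc0.le] at hz; exact hc1.ne hz)
  have hsq : ‖annulusBlaschke c z‖ ^ 2 = 1 := by
    refine Complex.sq_norm_eq_of_conj_eq_mul_inv hne ?_
    rw [conj_annulusBlaschke hc0 hc1, ← inv_eq_conj hz, annulusBlaschke_inv hc0 hc1 hz0,
      ofReal_one, one_mul]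
  exact (pow_eq_one_iff_of_nonneg (norm_nonneg _) two_ne_zero).1 hsq

lemma norm_annulusBlaschke_of_norm_eq_sq (hc0 : 0 < c) (hc1 : c < 1) (hz : ‖z‖ = c ^ 2) :
    ‖annulusBlaschke c z‖ = c := by
  have hz0 : z ≠ 0 := norm_ne_zero_iff.1 (by rw [hz]; positivity)
  have hc2 : c ^ 2 < c := pow_lt_self_of_lt_one₀ hc0 hc1 (by norm_num)
  have hne : annulusBlaschke c z ≠ 0 := annulusBlaschke_ne_zero hc0 hc1
    (by rw [hz]; exact pow_lt_pow_right_of_lt_one₀ hc0 hc1 (by norm_num))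
    (by rw [hz]; exact hc2.trans (hc1.trans (one_lt_inv₀ hc0 |>.2 hc1)))
    (by rintro rfl; rw [Complex.norm_of_nonneg hc0.le] at hz; exact hc2.ne' hz)
  have hconj : conj z = (c : ℂ) ^ 4 / z := by
    rw [eq_div_iff hz0, mul_comm, mul_conj', hz]; push_cast; ring
  have hsq : ‖annulusBlaschke c z‖ ^ 2 = c ^ 2 := by
    refine Complex.sq_norm_eq_of_conj_eq_mul_inv hne ?_
    rw [conj_annulusBlaschke hc0 hc1, hconj, annulusBlaschke_pow_four_div hc0]
    push_cast; rfl
  exact (sq_eq_sq₀ (norm_nonneg _) hc0.le).1 hsq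

end annulusBlaschke

/-- For every `q ∈ (0,1)` there is a function `φ` holomorphic on the annulus
`{q^{3/2} < |z| < q^{-1/2}}` which is unimodular on `|z| = 1`, of modulus `√q`
on `|z| = q`, vanishes at `√q`, and has no other zero in `{q ≤ |z| ≤ 1}`. -/
theorem stmt19 (q : ℝ) (hq : q ∈ Set.Ioo (0 : ℝ) 1) :
    ∃ φ : ℂ → ℂ,
      DifferentiableOn ℂ φ
        {z : ℂ | q ^ ((3 : ℝ) / 2) < ‖z‖ ∧
          ‖z‖ < q ^ (-(1 : ℝ) / 2)} ∧
      (∀ z : ℂ, ‖z‖ = 1 → ‖φ z‖ = 1) ∧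
      (∀ z : ℂ, ‖z‖ = q → ‖φ z‖ = Real.sqrt q) ∧
      φ ((Real.sqrt q : ℝ) : ℂ) = 0 ∧
      (∀ z : ℂ, q ≤ ‖z‖ → ‖z‖ ≤ 1 →
        z ≠ ((Real.sqrt q : ℝ) : ℂ) → φ z ≠ 0) := by
  obtain ⟨hq0, hq1⟩ := hq
  set c := Real.sqrt q
  have hc0 : 0 < c := Real.sqrt_pos.2 hq0
  have hc1 : c < 1 := (Real.sqrt_lt' one_pos).2 (by rwa [one_pow])
  have hcq : c ^ 2 = q := Real.sq_sqrt hq0.le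
  have hc3 : q ^ ((3 : ℝ) / 2) = c ^ 3 := by
    rw [← hcq, ← Real.rpow_natCast, ← Real.rpow_mul hc0.le]; norm_num
  have hcinv : q ^ (-(1 : ℝ) / 2) = c⁻¹ := by
    rw [← hcq, ← Real.rpow_natCast, ← Real.rpow_mul hc0.le]; norm_num [Real.rpow_neg_one]
  refine ⟨annulusBlaschke c, ?_, fun z ↦ norm_annulusBlaschke_of_norm_eq_one hc0 hc1,
    fun z hz ↦ norm_annulusBlaschke_of_norm_eq_sq hc0 hc1 (hz.trans hcq.symm),
    annulusBlaschke_self hc0 hc1, fun z h1 h2 hz ↦ annulusBlaschke_ne_zero hc0 hc1 ?_ ?_ hz⟩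
  · rw [hc3, hcinv]
    exact differentiableOn_annulusBlaschke hc0 hc1
  · calc c ^ 3 < c ^ 2 := pow_lt_pow_right_of_lt_one₀ hc0 hc1 (by norm_num)
      _ = q := hcq
      _ ≤ ‖z‖ := h1
  · exact h2.trans_lt (one_lt_inv₀ hc0 |>.2 hc1)
end
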